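/- arXiv:2605.27228 — 10 statements merged into one kernel-verified Lean document; each statement's English description precedes it below -/
import Mathlib

section
/- Let H, Q_1, ..., Q_c be n×n Hermitian complex matrices and q ∈ ℝ^c. Suppose the primal semidefinite program is strictly feasible, i.e. there exists a Hermitian positive definite matrix X̄ with Re Tr(Q_i X̄) = q_i for every i ∈ {1,...,c}, and suppose the primal objective is bounded below on the feasible set, i.e. the set {Re Tr(H X) : X positive semidefinite Hermitian, Re Tr(Q_i X) = q_i for all i} is bounded below. Then strong duality holds: sInf {Re Tr(H X) : X positive semidefinite, Re Tr(Q_i X) = q_i for all i} = sSup {Σ_{i=1}^c μ_i q_i : μ ∈ ℝ^c such that H − Σ_{i=1}^c μ_i Q_i is positive semidefinite}. -/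
open Matrix
open scoped ComplexOrder

namespace SDPaux

variable {n : ℕ}

/-- real smul commutes with conjTranspose -/
lemma conjT_real_smul (r : ℝ) (A : Matrix (Fin n) (Fin n) ℂ) :
    (r • A)ᴴ = r • Aᴴ := by
  ext i j
  simp [Matrix.conjTranspose_apply, star_smul]

lemma herm_real_smul {A : Matrix (Fin n) (Fin n) ℂ} (hA : A.IsHermitian) (r : ℝ) :
    (r • A).IsHermitian := by
  unfold Matrix.IsHermitian
  rw [conjT_real_smul, hA.eq]

/-- quadratic form of real smul -/
lemma form_real_smul (r : ℝ) (A : Matrix (Fin n) (Fin n) ℂ) (x : Fin n → ℂ) :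
    star x ⬝ᵥ (r • A) *ᵥ x = r • (star x ⬝ᵥ A *ᵥ x) := by
  rw [Matrix.smul_mulVec, dotProduct_smul]

lemma posSemidef_real_smul {A : Matrix (Fin n) (Fin n) ℂ} (hA : A.PosSemidef)
    {r : ℝ} (hr : 0 ≤ r) : (r • A).PosSemidef := by
  refine PosSemidef.of_dotProduct_mulVec_nonneg (herm_real_smul hA.1 r) fun x => ?_
  rw [form_real_smul]
  have h := hA.dotProduct_mulVec_nonneg x
  rw [Complex.nonneg_iff] at h ⊢
  constructor
  · rw [Complex.smul_re]; exact mul_nonneg hr h.1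
  · rw [Complex.smul_im, ← h.2]; simp

lemma posDef_real_smul {A : Matrix (Fin n) (Fin n) ℂ} (hA : A.PosDef)
    {r : ℝ} (hr : 0 < r) : (r • A).PosDef := by
  refine PosDef.of_dotProduct_mulVec_pos (herm_real_smul hA.1 r) fun x hx => ?_
  rw [form_real_smul]
  have h := hA.dotProduct_mulVec_pos hx
  rw [Complex.lt_def] at h ⊢
  constructor
  · simpa using mul_lt_mul_of_pos_left h.1 hr
  · simp [← h.2]

/-- a Hermitian matrix with nonnegative real quadratic form is PSD -/
lemma posSemidef_of_re_form {M : Matrix (Fin n) (Fin n) ℂ} (hM : M.IsHermitian)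
    (h : ∀ x : Fin n → ℂ, 0 ≤ (star x ⬝ᵥ M *ᵥ x).re) : M.PosSemidef := by
  refine PosSemidef.of_dotProduct_mulVec_nonneg hM fun x => ?_
  rw [Complex.nonneg_iff]
  refine ⟨h x, ?_⟩
  have hst : star (star x ⬝ᵥ M *ᵥ x) = star x ⬝ᵥ M *ᵥ x := by
    rw [← star_dotProduct, Matrix.star_mulVec, ← Matrix.dotProduct_mulVec, hM.eq]
  have := congrArg Complex.im hst
  simp only [Complex.star_def, Complex.conj_im] at this
  linarith

lemma trace_mul_form (M : Matrix (Fin n) (Fin n) ℂ) (x : Fin n → ℂ) :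
    Matrix.trace (M * Matrix.vecMulVec x (star x)) = star x ⬝ᵥ M *ᵥ x := by
  simp only [Matrix.trace, Matrix.diag_apply, Matrix.mul_apply, Matrix.vecMulVec_apply,
    dotProduct, Matrix.mulVec, Pi.star_apply]
  refine Finset.sum_congr rfl fun i _ => ?_
  rw [Finset.mul_sum]
  refine Finset.sum_congr rfl fun j _ => ?_
  ring

lemma posSemidef_vecMulVec_star (x : Fin n → ℂ) :
    (Matrix.vecMulVec x (star x)).PosSemidef := by
  refine PosSemidef.of_dotProduct_mulVec_nonneg ?_ ?_
  · ext i j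
    simp [Matrix.conjTranspose_apply, Matrix.vecMulVec_apply, mul_comm]
  · intro y
    have hmv : (Matrix.vecMulVec x (star x)) *ᵥ y = fun i => x i * (star x ⬝ᵥ y) := by
      funext i
      simp [Matrix.mulVec, Matrix.vecMulVec_apply, dotProduct, Finset.mul_sum, mul_assoc]
    rw [hmv]
    have : star y ⬝ᵥ (fun i => x i * (star x ⬝ᵥ y)) = (star y ⬝ᵥ x) * (star x ⬝ᵥ y) := by
      simp [dotProduct, Finset.sum_mul, mul_assoc]
    rw [this, star_dotProduct]
    exact star_mul_self_nonneg _





lemma trace_nonneg_of_psd {A : Matrix (Fin n) (Fin n) ℂ} (hA : A.PosSemidef) :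
    0 ≤ Matrix.trace A := by
  rw [Matrix.trace]
  refine Finset.sum_nonneg fun i _ => ?_
  have h := hA.dotProduct_mulVec_nonneg (Pi.single i (1:ℂ))
  have hstar : star (Pi.single i (1:ℂ) : Fin n → ℂ) = (Pi.single i (1:ℂ) : Fin n → ℂ) := by
    funext j
    by_cases hji : j = i <;> simp [Pi.single_apply, hji]
  simpa [hstar, Matrix.mulVec_single, single_dotProduct] using h

section MO
open scoped MatrixOrder
lemma exists_eq_conjT_mul_self {A : Matrix (Fin n) (Fin n) ℂ} (hA : A.PosSemidef) :
    ∃ C : Matrix (Fin n) (Fin n) ℂ, A = Cᴴ * C := by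
  obtain ⟨C, rfl⟩ := CStarAlgebra.nonneg_iff_eq_star_mul_self.mp hA.nonneg
  exact ⟨C, rfl⟩
end MO

lemma trace_mul_nonneg {A B : Matrix (Fin n) (Fin n) ℂ} (hA : A.PosSemidef)
    (hB : B.PosSemidef) : 0 ≤ Matrix.trace (A * B) := by
  obtain ⟨C, rfl⟩ := exists_eq_conjT_mul_self hA
  have h1 : Cᴴ * C * B = Cᴴ * (C * B) := by rw [Matrix.mul_assoc]
  rw [h1, Matrix.trace_mul_comm]
  have : C * B * Cᴴ = C * B * Cᴴ := rfl
  have h2 : (C * B) * Cᴴ = C * B * Cᴴ := rfl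
  rw [show (C * B) * Cᴴ = C * B * Cᴴ from rfl]
  exact trace_nonneg_of_psd (hB.mul_mul_conjTranspose_same C)

lemma re_trace_mul_nonneg {A B : Matrix (Fin n) (Fin n) ℂ} (hA : A.PosSemidef)
    (hB : B.PosSemidef) : 0 ≤ (Matrix.trace (A * B)).re :=
  (Complex.nonneg_iff.mp (trace_mul_nonneg hA hB)).1

/-- lower bound for the quadratic form of a positive definite matrix -/
lemma exists_form_lowerbound {P : Matrix (Fin n) (Fin n) ℂ} (hP : P.PosDef) :
    ∃ m > 0, ∀ x : Fin n → ℂ, m * ‖x‖ ^ 2 ≤ (star x ⬝ᵥ P *ᵥ x).re := by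
  have hform_cont : Continuous fun x : Fin n → ℂ => (star x ⬝ᵥ P *ᵥ x).re := by
    apply Complex.continuous_re.comp
    unfold dotProduct Matrix.mulVec
    refine continuous_finset_sum _ fun i _ => ?_
    exact ((continuous_apply i).star).mul
      (continuous_finset_sum _ fun j _ => continuous_const.mul (continuous_apply j))
  rcases Nat.eq_zero_or_pos n with hn | hn
  · refine ⟨1, one_pos, fun x => ?_⟩
    have hx : x = 0 := by subst hn; funext i; exact absurd i.2 (by omega)
    subst hx
    simp
  · have : Nonempty (Fin n) := ⟨⟨0, hn⟩⟩
    have hsne : (Metric.sphere (0 : Fin n → ℂ) 1).Nonempty :=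
      NormedSpace.sphere_nonempty.mpr zero_le_one
    obtain ⟨x₀, hx₀mem, hx₀min'⟩ :=
      (isCompact_sphere (0 : Fin n → ℂ) 1).exists_isMinOn hsne hform_cont.continuousOn
    have hx₀min : ∀ y ∈ Metric.sphere (0 : Fin n → ℂ) 1,
        (star x₀ ⬝ᵥ P *ᵥ x₀).re ≤ (star y ⬝ᵥ P *ᵥ y).re := fun y hy => hx₀min' hy
    have hx₀norm : ‖x₀‖ = 1 := by simpa using hx₀mem
    have hx₀ne : x₀ ≠ 0 := by
      intro h; rw [h] at hx₀norm; simp at hx₀norm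
    set m := (star x₀ ⬝ᵥ P *ᵥ x₀).re with hm
    have hmpos : 0 < m := by
      have := hP.re_dotProduct_pos hx₀ne
      simpa [RCLike.re] using this
    refine ⟨m, hmpos, fun x => ?_⟩
    rcases eq_or_ne x 0 with rfl | hx
    · simp
    · have hxn : (0:ℝ) < ‖x‖ := norm_pos_iff.mpr hx
      set y := (‖x‖⁻¹ : ℝ) • x with hy
      have hymem : y ∈ Metric.sphere (0 : Fin n → ℂ) 1 := by
        simp only [Metric.mem_sphere, dist_zero_right, hy, norm_smul]
        rw [norm_inv, Real.norm_eq_abs, abs_of_pos hxn, inv_mul_cancel₀ hxn.ne']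
      have hform_y : (star y ⬝ᵥ P *ᵥ y).re = ‖x‖⁻¹ * (‖x‖⁻¹ * (star x ⬝ᵥ P *ᵥ x).re) := by
        rw [hy]
        rw [star_smul, star_trivial, Matrix.mulVec_smul, smul_dotProduct, dotProduct_smul]
        rw [Complex.smul_re, Complex.smul_re]; simp [smul_eq_mul]
      have hle := hx₀min y hymem
      rw [hform_y] at hle
      have h2 : m * ‖x‖ ^ 2 ≤ (‖x‖⁻¹ * (‖x‖⁻¹ * (star x ⬝ᵥ P *ᵥ x).re)) * ‖x‖ ^ 2 :=
        mul_le_mul_of_nonneg_right hle (by positivity)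
      calc m * ‖x‖ ^ 2 ≤ _ := h2
        _ = (star x ⬝ᵥ P *ᵥ x).re := by field_simp





lemma form_abs_bound (E : Matrix (Fin n) (Fin n) ℂ) {δ : ℝ} (hδ : 0 ≤ δ)
    (hE : ∀ i j, ‖E i j‖ ≤ δ) (x : Fin n → ℂ) :
    ‖star x ⬝ᵥ E *ᵥ x‖ ≤ δ * (n^2 * ‖x‖^2) := by
  have h1 : star x ⬝ᵥ E *ᵥ x = ∑ i, ∑ j, star (x i) * (E i j * x j) := by
    simp [dotProduct, Matrix.mulVec, Finset.mul_sum]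
  rw [h1]
  calc ‖∑ i, ∑ j, star (x i) * (E i j * x j)‖
      ≤ ∑ i, ‖∑ j, star (x i) * (E i j * x j)‖ := norm_sum_le _ _
    _ ≤ ∑ i : Fin n, ∑ j : Fin n, ‖star (x i) * (E i j * x j)‖ :=
        Finset.sum_le_sum fun i _ => norm_sum_le _ _
    _ ≤ ∑ _i : Fin n, ∑ _j : Fin n, δ * (‖x‖ * ‖x‖) := by
        refine Finset.sum_le_sum fun i _ => Finset.sum_le_sum fun j _ => ?_
        rw [norm_mul, norm_mul]
        have hxi : ‖star (x i)‖ ≤ ‖x‖ := by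
          rw [norm_star]
          exact norm_le_pi_norm x i
        have hxj : ‖x j‖ ≤ ‖x‖ := by
          exact norm_le_pi_norm x j
        have hx0 : (0:ℝ) ≤ ‖x‖ := norm_nonneg _
        calc ‖star (x i)‖ * (‖E i j‖ * ‖x j‖)
            ≤ ‖x‖ * (δ * ‖x‖) := by
              apply mul_le_mul hxi _ (by positivity) hx0
              exact mul_le_mul (hE i j) hxj (norm_nonneg _) hδ
          _ = δ * (‖x‖ * ‖x‖) := by ring
    _ = δ * (n^2 * ‖x‖^2) := by
        simp [Finset.sum_const, Finset.card_univ]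
        ring

/-- perturbation of a positive definite matrix by a small Hermitian one stays PSD -/
lemma posSemidef_add_small {P : Matrix (Fin n) (Fin n) ℂ} (hP : P.PosDef) :
    ∃ δ > 0, ∀ E : Matrix (Fin n) (Fin n) ℂ, E.IsHermitian →
      (∀ i j, ‖E i j‖ ≤ δ) → (P + E).PosSemidef := by
  obtain ⟨m, hm, hlb⟩ := exists_form_lowerbound hP
  refine ⟨m / (n^2 + 1), by positivity, fun E hE hEsmall => ?_⟩
  have hδ0 : (0:ℝ) ≤ m / (n^2 + 1) := by positivity
  refine posSemidef_of_re_form (hP.1.add hE) fun x => ?_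
  have hsplit : star x ⬝ᵥ (P + E) *ᵥ x = star x ⬝ᵥ P *ᵥ x + star x ⬝ᵥ E *ᵥ x := by
    rw [Matrix.add_mulVec, dotProduct_add]
  rw [hsplit, Complex.add_re]
  have hEb := form_abs_bound E hδ0 hEsmall x
  have hre : -(m / (n^2 + 1) * (n^2 * ‖x‖^2)) ≤ (star x ⬝ᵥ E *ᵥ x).re := by
    have := Complex.abs_re_le_norm (star x ⬝ᵥ E *ᵥ x)
    have h2 := abs_le.mp this
    linarith [h2.1, hEb]
  have hP' := hlb x
  have hkey : m / (n^2 + 1) * (n^2 * ‖x‖^2) ≤ m * ‖x‖^2 := by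
    rw [div_mul_eq_mul_div, div_le_iff₀ (by positivity)]
    have hx2 : (0:ℝ) ≤ ‖x‖^2 := by positivity
    nlinarith [sq_nonneg (n:ℝ)]
  linarith


section Tre

variable {n : ℕ}

lemma reTr_smul_left (a : ℝ) (A X : Matrix (Fin n) (Fin n) ℂ) :
    (Matrix.trace ((a • A) * X)).re = a * (Matrix.trace (A * X)).re := by
  rw [Matrix.smul_mul, Matrix.trace_smul, Complex.smul_re, smul_eq_mul]

lemma reTr_add_left (A B X : Matrix (Fin n) (Fin n) ℂ) :
    (Matrix.trace ((A + B) * X)).re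
      = (Matrix.trace (A * X)).re + (Matrix.trace (B * X)).re := by
  rw [Matrix.add_mul, Matrix.trace_add, Complex.add_re]

lemma reTr_sum_left {ι : Type*} (s : Finset ι) (f : ι → Matrix (Fin n) (Fin n) ℂ)
    (X : Matrix (Fin n) (Fin n) ℂ) :
    (Matrix.trace ((∑ i ∈ s, f i) * X)).re = ∑ i ∈ s, (Matrix.trace (f i * X)).re := by
  rw [Matrix.sum_mul, Matrix.trace_sum]
  exact Complex.re_sum s _

lemma reTr_smul_right (a : ℝ) (A X : Matrix (Fin n) (Fin n) ℂ) :
    (Matrix.trace (A * (a • X))).re = a * (Matrix.trace (A * X)).re := by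
  rw [Matrix.mul_smul, Matrix.trace_smul, Complex.smul_re, smul_eq_mul]

lemma reTr_add_right (A X Y : Matrix (Fin n) (Fin n) ℂ) :
    (Matrix.trace (A * (X + Y))).re
      = (Matrix.trace (A * X)).re + (Matrix.trace (A * Y)).re := by
  rw [Matrix.mul_add, Matrix.trace_add, Complex.add_re]

lemma reTr_sub_left (A B X : Matrix (Fin n) (Fin n) ℂ) :
    (Matrix.trace ((A - B) * X)).re
      = (Matrix.trace (A * X)).re - (Matrix.trace (B * X)).re := by
  rw [Matrix.sub_mul, Matrix.trace_sub, Complex.sub_re]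

lemma reTr_conjTranspose_right {A : Matrix (Fin n) (Fin n) ℂ} (hA : A.IsHermitian)
    (X : Matrix (Fin n) (Fin n) ℂ) :
    (Matrix.trace (A * Xᴴ)).re = (Matrix.trace (A * X)).re := by
  have h : A * Xᴴ = (X * Aᴴ)ᴴ := by rw [Matrix.conjTranspose_mul, Matrix.conjTranspose_conjTranspose]
  rw [h, Matrix.trace_conjTranspose, hA.eq, Matrix.trace_mul_comm]
  simp [Complex.star_def]

end Tre

section Main

open Filter Topology

variable {n c : ℕ}

set_option maxHeartbeats 2000000 in
lemma dual_exists (H : Matrix (Fin n) (Fin n) ℂ)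
    (Q : Fin c → Matrix (Fin n) (Fin n) ℂ) (q : Fin c → ℝ)
    (hH : H.IsHermitian) (hQ : ∀ i, (Q i).IsHermitian)
    (Xb : Matrix (Fin n) (Fin n) ℂ) (hXb : Xb.PosDef)
    (hXbfeas : ∀ i, (Matrix.trace (Q i * Xb)).re = q i)
    (p0 : ℝ)
    (hp0 : ∀ X : Matrix (Fin n) (Fin n) ℂ, X.PosSemidef →
      (∀ i, (Matrix.trace (Q i * X)).re = q i) → p0 ≤ (Matrix.trace (H * X)).re)
    {ε : ℝ} (hε : 0 < ε) :
    ∃ μ : Fin c → ℝ, (H - ∑ i, μ i • Q i).PosSemidef ∧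
      p0 - ε < ∑ i, μ i * q i := by
  classical
  -- the linear feasibility map
  set T : Matrix (Fin n) (Fin n) ℂ →ₗ[ℝ] (Fin c → ℝ) :=
    { toFun := fun X i => (Matrix.trace (Q i * X)).re
      map_add' := fun X Y => by funext i; exact reTr_add_right _ _ _
      map_smul' := fun r X => by
        funext i
        simp only [RingHom.id_apply, Pi.smul_apply, smul_eq_mul]
        exact reTr_smul_right r (Q i) X } with hTdef
  have hTapp : ∀ (X : Matrix (Fin n) (Fin n) ℂ) (i : Fin c),
      T X i = (Matrix.trace (Q i * X)).re := fun X i => rfl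
  have hTXb : T Xb = q := funext fun i => hXbfeas i
  have hrange_q : q ∈ LinearMap.range T := ⟨Xb, hTXb⟩
  have hTconj : ∀ X : Matrix (Fin n) (Fin n) ℂ, T Xᴴ = T X := by
    intro X; funext i
    exact reTr_conjTranspose_right (hQ i) X
  -- the set to separate from
  set A : Set (ℝ × (Fin c → ℝ)) :=
    {p | ∃ X : Matrix (Fin n) (Fin n) ℂ, X.PosSemidef ∧
      (Matrix.trace (H * X)).re ≤ p.1 ∧ ∀ i, (Matrix.trace (Q i * X)).re = p.2 i} with hAdef
  have hAconv : Convex ℝ A := by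
    rintro ⟨t1, u1⟩ ⟨X1, hX1, ht1, hu1⟩ ⟨t2, u2⟩ ⟨X2, hX2, ht2, hu2⟩ a b ha hb hab
    refine ⟨a • X1 + b • X2, (posSemidef_real_smul hX1 ha).add (posSemidef_real_smul hX2 hb),
      ?_, ?_⟩
    · rw [reTr_add_right, reTr_smul_right, reTr_smul_right]
      have h1 : a * (Matrix.trace (H * X1)).re ≤ a * t1 :=
        mul_le_mul_of_nonneg_left ht1 ha
      have h2 : b * (Matrix.trace (H * X2)).re ≤ b * t2 :=
        mul_le_mul_of_nonneg_left ht2 hb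
      simpa using add_le_add h1 h2
    · intro i
      rw [reTr_add_right, reTr_smul_right, reTr_smul_right, hu1 i, hu2 i]
      simp
  -- the point to separate
  set pt : ℝ × (Fin c → ℝ) := (p0 - ε, q) with hptdef
  -- Step 1 : the point is not in the closure of A
  have hptnot : pt ∉ closure A := by
    intro hmem
    obtain ⟨a, haA, halim⟩ := mem_closure_iff_seq_limit.mp hmem
    have ht_lim : Tendsto (fun k => (a k).1) atTop (𝓝 (p0 - ε)) :=
      (continuous_fst.tendsto pt).comp halim
    have hu_lim : Tendsto (fun k => (a k).2) atTop (𝓝 q) :=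
      (continuous_snd.tendsto pt).comp halim
    choose X hXpsd hXobj hXfeas using haA
    have hu_mem : ∀ k, (a k).2 ∈ LinearMap.range T :=
      fun k => ⟨X k, funext fun i => hXfeas k i⟩
    -- a linear right inverse of T on its range
    obtain ⟨R', hR'⟩ :=
      T.rangeRestrict.exists_rightInverse_of_surjective T.range_rangeRestrict
    have hR'app : ∀ v : LinearMap.range T, T (R' v) = (v : Fin c → ℝ) := by
      intro v
      have := LinearMap.ext_iff.mp hR' v
      exact congrArg Subtype.val this
    have hR'cont : Continuous R' := R'.continuous_of_finiteDimensional
    set d : ℕ → LinearMap.range T :=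
      fun k => ⟨q - (a k).2, sub_mem hrange_q (hu_mem k)⟩ with hddef
    have hd_lim : Tendsto d atTop (𝓝 0) := by
      rw [tendsto_subtype_rng]
      simpa using (tendsto_const_nhds (x := q)).sub hu_lim
    have hZ0_lim : Tendsto (fun k => R' (d k)) atTop (𝓝 0) := by
      have h := (hR'cont.tendsto 0).comp hd_lim
      simpa [Function.comp_def] using h
    set Z : ℕ → Matrix (Fin n) (Fin n) ℂ :=
      fun k => (1/2 : ℝ) • (R' (d k) + (R' (d k))ᴴ) with hZdef
    have hZherm : ∀ k, (Z k).IsHermitian := by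
      intro k
      unfold Matrix.IsHermitian
      rw [hZdef]
      rw [conjT_real_smul, Matrix.conjTranspose_add, Matrix.conjTranspose_conjTranspose,
        add_comm]
    have hZ_lim : Tendsto Z atTop (𝓝 0) := by
      have hconj : Tendsto (fun k => (R' (d k))ᴴ) atTop (𝓝 0) := by
        have hc : Continuous fun M : Matrix (Fin n) (Fin n) ℂ => Mᴴ :=
          continuous_id.matrix_conjTranspose
        have := (hc.tendsto 0).comp hZ0_lim
        simpa [Function.comp_def] using this
      have := (hZ0_lim.add hconj).const_smul (1/2 : ℝ)
      rw [hZdef]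
      simpa [smul_add] using this
    have hTZ : ∀ k, T (Z k) = q - (a k).2 := by
      intro k
      have h1 : T (Z k) = (1/2 : ℝ) • (T (R' (d k)) + T ((R' (d k))ᴴ)) := by
        rw [hZdef, _root_.map_smul, map_add]
      have hdk : (d k : Fin c → ℝ) = q - (a k).2 := rfl
      rw [h1, hTconj (R' (d k)), hR'app (d k), hdk]
      funext i
      simp only [Pi.smul_apply, Pi.add_apply, Pi.sub_apply, smul_eq_mul]
      ring
    -- fixed mixing parameter
    set hbar : ℝ := (Matrix.trace (H * Xb)).re with hhbar
    set s : ℝ := min (1/2) (ε / (2 * (|hbar - p0| + 1))) with hsdef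
    have hs_pos : 0 < s := lt_min (by norm_num) (by positivity)
    have hs_half : s ≤ 1/2 := min_le_left _ _
    have hs_small : s ≤ ε / (2 * (|hbar - p0| + 1)) := min_le_right _ _
    have h1s : (0:ℝ) ≤ 1 - s := by linarith
    -- perturbation bound for s • Xb
    obtain ⟨δ, hδpos, hpert⟩ := posSemidef_add_small (posDef_real_smul hXb hs_pos)
    set W : ℕ → Matrix (Fin n) (Fin n) ℂ := fun k => (1 - s) • Z k with hWdef
    have hW_lim : Tendsto W atTop (𝓝 0) := by
      have := hZ_lim.const_smul (1 - s)
      simpa using this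
    have hWherm : ∀ k, (W k).IsHermitian := by
      intro k
      unfold Matrix.IsHermitian
      rw [hWdef, conjT_real_smul, (hZherm k).eq]
    have hEsmall : ∀ᶠ k in atTop, ∀ i j, ‖W k i j‖ ≤ δ := by
      rw [Filter.eventually_all]
      intro i
      rw [Filter.eventually_all]
      intro j
      have hent : Tendsto (fun k => W k i j) atTop (𝓝 0) := by
        have hc : Continuous fun M : Matrix (Fin n) (Fin n) ℂ => M i j :=
          continuous_id.matrix_elem i j
        have := (hc.tendsto 0).comp hW_lim
        simpa [Function.comp_def] using this
      have habs : Tendsto (fun k => ‖W k i j‖) atTop (𝓝 0) := by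
        have := (continuous_norm.tendsto 0).comp hent
        simpa [Function.comp_def] using this
      exact (habs.eventually_lt_const hδpos).mono fun k hk => le_of_lt hk
    have hτ : Tendsto (fun k => (Matrix.trace (H * Z k)).re) atTop (𝓝 0) := by
      have hc : Continuous fun M : Matrix (Fin n) (Fin n) ℂ => (Matrix.trace (H * M)).re :=
        Complex.continuous_re.comp ((continuous_const.matrix_mul continuous_id).matrix_trace)
      have := (hc.tendsto 0).comp hZ_lim
      simpa [Function.comp_def] using this
    have hlim_tot : Tendsto
        (fun k => (1 - s) * (a k).1 + s * hbar + (1 - s) * (Matrix.trace (H * Z k)).re)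
        atTop (𝓝 ((1 - s) * (p0 - ε) + s * hbar + (1 - s) * 0)) :=
      ((ht_lim.const_mul (1 - s)).add tendsto_const_nhds).add (hτ.const_mul (1 - s))
    have hlt : (1 - s) * (p0 - ε) + s * hbar + (1 - s) * 0 < p0 := by
      have habs : hbar - p0 ≤ |hbar - p0| := le_abs_self _
      have hpos : (0:ℝ) < |hbar - p0| + 1 := by positivity
      have hss : s * (|hbar - p0| + 1) ≤ ε / 2 := by
        calc s * (|hbar - p0| + 1)
            ≤ (ε / (2 * (|hbar - p0| + 1))) * (|hbar - p0| + 1) :=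
              mul_le_mul_of_nonneg_right hs_small (le_of_lt hpos)
          _ = ε / 2 := by field_simp
      nlinarith [hs_pos, hs_half, hε, abs_nonneg (hbar - p0)]
    have hobj_ev : ∀ᶠ k in atTop,
        (1 - s) * (a k).1 + s * hbar + (1 - s) * (Matrix.trace (H * Z k)).re < p0 :=
      hlim_tot.eventually_lt_const hlt
    obtain ⟨k, hk1, hk2⟩ := (hEsmall.and hobj_ev).exists
    -- the corrected feasible point
    set Y : Matrix (Fin n) (Fin n) ℂ := (1 - s) • X k + (s • Xb + W k) with hYdef
    have hYpsd : Y.PosSemidef :=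
      (posSemidef_real_smul (hXpsd k) h1s).add (hpert (W k) (hWherm k) hk1)
    have hTY : T Y = q := by
      rw [hYdef]
      simp only [map_add, _root_.map_smul, hTXb]
      have hTXk : T (X k) = (a k).2 := funext fun i => hXfeas k i
      have hTW : T (W k) = (1 - s) • (q - (a k).2) := by
        rw [hWdef, _root_.map_smul, hTZ k]
      rw [hTXk, hTW]
      funext i
      simp only [Pi.add_apply, Pi.smul_apply, Pi.sub_apply, smul_eq_mul]
      ring
    have hYfeas : ∀ i, (Matrix.trace (Q i * Y)).re = q i := by
      intro i
      have := congrFun hTY i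
      exact this
    have hYobj : (Matrix.trace (H * Y)).re
        ≤ (1 - s) * (a k).1 + s * hbar + (1 - s) * (Matrix.trace (H * Z k)).re := by
      rw [hYdef, reTr_add_right, reTr_add_right, reTr_smul_right, reTr_smul_right,
        hWdef, reTr_smul_right]
      have := mul_le_mul_of_nonneg_left (hXobj k) h1s
      linarith
    have := hp0 Y hYpsd hYfeas
    linarith
  -- Step 2 : separation
  obtain ⟨f, u₀, hfpt, hfA⟩ :=
    geometric_hahn_banach_point_closed (hAconv.closure) isClosed_closure hptnot
  set α : ℝ := f (1, 0) with hαdef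
  set β : Fin c → ℝ := fun i => f (0, Pi.single i 1) with hβdef
  have hf_eval : ∀ (t : ℝ) (u : Fin c → ℝ), f (t, u) = α * t + ∑ i, β i * u i := by
    intro t u
    have hdecomp : ((t, u) : ℝ × (Fin c → ℝ))
        = t • (((1:ℝ), (0 : Fin c → ℝ)) : ℝ × (Fin c → ℝ))
          + ∑ i, u i • ((((0:ℝ), (Pi.single i 1 : Fin c → ℝ))) : ℝ × (Fin c → ℝ)) := by
      refine Prod.ext ?_ ?_
      · simp [Prod.fst_sum]
      · simp only [Prod.snd_add, Prod.smul_snd, Prod.snd_sum, smul_zero, zero_add]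
        funext j
        rw [Finset.sum_apply]
        simp [Pi.single_apply]
    rw [hdecomp, map_add, map_sum, f.map_smul]
    simp only [smul_eq_mul]
    congr 1
    · exact mul_comm _ _
    · refine Finset.sum_congr rfl fun i _ => ?_
      rw [f.map_smul, smul_eq_mul]
      exact mul_comm _ _
  have hsep : ∀ X : Matrix (Fin n) (Fin n) ℂ, X.PosSemidef → ∀ t : ℝ,
      (Matrix.trace (H * X)).re ≤ t →
      u₀ < α * t + ∑ i, β i * (Matrix.trace (Q i * X)).re := by
    intro X hX t ht
    have hmem : ((t, fun i => (Matrix.trace (Q i * X)).re) : ℝ × (Fin c → ℝ)) ∈ A :=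
      ⟨X, hX, ht, fun i => rfl⟩
    have := hfA _ (subset_closure hmem)
    rwa [hf_eval] at this
  have hu₀neg : u₀ < 0 := by
    have := hsep 0 Matrix.PosSemidef.zero 0 (by simp)
    simpa using this
  have hαnn : 0 ≤ α := by
    by_contra hneg
    push_neg at hneg
    have ht0 : (0:ℝ) ≤ u₀ / α := div_nonneg_of_nonpos (le_of_lt hu₀neg) (le_of_lt hneg)
    have hthis := hsep 0 Matrix.PosSemidef.zero (u₀ / α) (by simpa using ht0)
    have hα0 : α ≠ 0 := ne_of_lt hneg
    have hval : α * (u₀ / α) = u₀ := by field_simp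
    rw [hval] at hthis
    simp at hthis
  -- the dual slack matrix
  set M : Matrix (Fin n) (Fin n) ℂ := α • H + ∑ i, β i • Q i with hMdef
  have hMherm : M.IsHermitian := by
    unfold Matrix.IsHermitian
    rw [hMdef, Matrix.conjTranspose_add, conjT_real_smul, hH.eq, Matrix.conjTranspose_sum]
    congr 1
    refine Finset.sum_congr rfl fun i _ => ?_
    rw [conjT_real_smul, (hQ i).eq]
  have hMexpand : ∀ X : Matrix (Fin n) (Fin n) ℂ, (Matrix.trace (M * X)).re
      = α * (Matrix.trace (H * X)).re + ∑ i, β i * (Matrix.trace (Q i * X)).re := by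
    intro X
    rw [hMdef, reTr_add_left, reTr_smul_left, reTr_sum_left]
    congr 1
    exact Finset.sum_congr rfl fun i _ => reTr_smul_left _ _ _
  have hMform : ∀ x : Fin n → ℂ, 0 ≤ (star x ⬝ᵥ M *ᵥ x).re := by
    intro x
    by_contra hneg
    push_neg at hneg
    set v : ℝ := (star x ⬝ᵥ M *ᵥ x).re with hvdef
    have hr_pos : 0 < u₀ / v := div_pos_of_neg_of_neg hu₀neg hneg
    set X : Matrix (Fin n) (Fin n) ℂ := (u₀ / v) • Matrix.vecMulVec x (star x) with hXdef
    have hXpsd : X.PosSemidef :=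
      posSemidef_real_smul (posSemidef_vecMulVec_star x) (le_of_lt hr_pos)
    have hcalc : (Matrix.trace (M * X)).re = u₀ := by
      rw [hXdef, reTr_smul_right, trace_mul_form, ← hvdef, div_mul_cancel₀ _ (ne_of_lt hneg)]
    have := hsep X hXpsd ((Matrix.trace (H * X)).re) le_rfl
    rw [← hMexpand X, hcalc] at this
    exact lt_irrefl _ this
  have hMpsd : M.PosSemidef := posSemidef_of_re_form hMherm hMform
  -- evaluate the separating functional at the point
  have hptval : α * (p0 - ε) + ∑ i, β i * q i < u₀ := by
    have := hfpt
    rw [hptdef, hf_eval] at this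
    exact this
  rcases eq_or_lt_of_le hαnn with hα0 | hαpos
  · -- degenerate case is impossible
    exfalso
    have hMXb : 0 ≤ (Matrix.trace (M * Xb)).re :=
      re_trace_mul_nonneg hMpsd hXb.posSemidef
    rw [hMexpand Xb] at hMXb
    rw [← hα0] at hMXb hptval
    simp only [zero_mul, zero_add] at hMXb hptval
    have : ∑ i, β i * q i = ∑ i, β i * (Matrix.trace (Q i * Xb)).re :=
      Finset.sum_congr rfl fun i _ => by rw [hXbfeas i]
    rw [this] at hptval
    linarith
  · -- main case
    refine ⟨fun i => -(β i) / α, ?_, ?_⟩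
    · have hexp : H - ∑ i, (-(β i) / α) • Q i = α⁻¹ • M := by
        have h1 : ∀ i : Fin c, (-(β i) / α) • Q i = -((β i / α) • Q i) := by
          intro i; rw [neg_div, neg_smul]
        rw [Finset.sum_congr rfl fun i _ => h1 i, Finset.sum_neg_distrib, sub_neg_eq_add]
        rw [hMdef, smul_add, smul_smul, inv_mul_cancel₀ (ne_of_gt hαpos), one_smul,
          Finset.smul_sum]
        congr 1
        refine Finset.sum_congr rfl fun i _ => ?_
        rw [smul_smul]
        congr 1
        field_simp
      rw [hexp]
      exact posSemidef_real_smul hMpsd (le_of_lt (inv_pos.mpr hαpos))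
    · have hsum : ∑ i, (-(β i) / α) * q i = -(∑ i, β i * q i) / α := by
        have h1 : ∀ i : Fin c, (-(β i) / α) * q i = -(β i * q i / α) := by
          intro i; field_simp
        rw [Finset.sum_congr rfl fun i _ => h1 i, Finset.sum_neg_distrib, neg_div,
          Finset.sum_div]
      rw [hsum]
      rw [lt_div_iff₀ hαpos]
      have : α * (p0 - ε) < -(∑ i, β i * q i) := by linarith
      linarith [mul_comm α (p0 - ε) ▸ this]

end Main

end SDPaux


/-- **strong duality for SDPs.** Let `H, Q 1, ..., Q c` be `n × n` Hermitian
complex matrices and `q ∈ ℝ^c`.  If the primal SDP is strictly feasible (Slater) and its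
objective is bounded below on the feasible set, then
`sInf {Re Tr(H X) : X ⪰ 0, Re Tr(Q i X) = q i ∀ i}
  = sSup {∑ i, μ i * q i : μ ∈ ℝ^c, H − ∑ i, μ i • Q i ⪰ 0}`. -/
theorem stmt_0 {n c : ℕ} (H : Matrix (Fin n) (Fin n) ℂ)
    (Q : Fin c → Matrix (Fin n) (Fin n) ℂ) (q : Fin c → ℝ)
    (hH : H.IsHermitian) (hQ : ∀ i, (Q i).IsHermitian)
    (hSlater : ∃ Xbar : Matrix (Fin n) (Fin n) ℂ, Xbar.PosDef ∧
      ∀ i, (Matrix.trace (Q i * Xbar)).re = q i)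
    (hBdd : BddBelow {v : ℝ | ∃ X : Matrix (Fin n) (Fin n) ℂ, X.PosSemidef ∧
      (∀ i, (Matrix.trace (Q i * X)).re = q i) ∧ v = (Matrix.trace (H * X)).re}) :
    sInf {v : ℝ | ∃ X : Matrix (Fin n) (Fin n) ℂ, X.PosSemidef ∧
        (∀ i, (Matrix.trace (Q i * X)).re = q i) ∧ v = (Matrix.trace (H * X)).re}
      = sSup {v : ℝ | ∃ μ : Fin c → ℝ, (H - ∑ i, μ i • Q i).PosSemidef ∧
        v = ∑ i, μ i * q i} := by

  obtain ⟨Xb, hXb, hXbfeas⟩ := hSlater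
  set P : Set ℝ := {v : ℝ | ∃ X : Matrix (Fin n) (Fin n) ℂ, X.PosSemidef ∧
      (∀ i, (Matrix.trace (Q i * X)).re = q i) ∧ v = (Matrix.trace (H * X)).re} with hPdef
  set D : Set ℝ := {v : ℝ | ∃ μ : Fin c → ℝ, (H - ∑ i, μ i • Q i).PosSemidef ∧
      v = ∑ i, μ i * q i} with hDdef
  have hPne : P.Nonempty :=
    ⟨(Matrix.trace (H * Xb)).re, Xb, hXb.posSemidef, hXbfeas, rfl⟩
  have hweak : ∀ vd ∈ D, ∀ vp ∈ P, vd ≤ vp := by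
    rintro vd ⟨μ, hμpsd, rfl⟩ vp ⟨X, hX, hXfeas, rfl⟩
    have h0 := SDPaux.re_trace_mul_nonneg hμpsd hX
    rw [SDPaux.reTr_sub_left, SDPaux.reTr_sum_left] at h0
    have hterm : ∀ i : Fin c, (Matrix.trace ((μ i • Q i) * X)).re = μ i * q i := by
      intro i; rw [SDPaux.reTr_smul_left, hXfeas i]
    rw [Finset.sum_congr rfl fun i _ => hterm i] at h0
    linarith
  have hp0 : ∀ X : Matrix (Fin n) (Fin n) ℂ, X.PosSemidef →
      (∀ i, (Matrix.trace (Q i * X)).re = q i) → sInf P ≤ (Matrix.trace (H * X)).re :=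
    fun X hX hf => csInf_le hBdd ⟨X, hX, hf, rfl⟩
  have hkey : ∀ ε : ℝ, 0 < ε → ∃ vd ∈ D, sInf P - ε < vd := by
    intro ε hε
    obtain ⟨μ, hpsd, hlt⟩ := SDPaux.dual_exists H Q q hH hQ Xb hXb hXbfeas (sInf P) hp0 hε
    exact ⟨∑ i, μ i * q i, ⟨μ, hpsd, rfl⟩, hlt⟩
  have hDne : D.Nonempty := by
    obtain ⟨vd, hvd, _⟩ := hkey 1 one_pos
    exact ⟨vd, hvd⟩
  have hDbdd : BddAbove D := by
    refine ⟨(Matrix.trace (H * Xb)).re, fun vd hvd => ?_⟩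
    exact hweak vd hvd _ ⟨Xb, hXb.posSemidef, hXbfeas, rfl⟩
  apply le_antisymm
  · refine le_of_forall_pos_lt_add fun ε hε => ?_
    obtain ⟨vd, hvd, hlt⟩ := hkey ε hε
    have := le_csSup hDbdd hvd
    linarith
  · exact csSup_le hDne fun vd hvd => le_csInf hPne fun vp hvp => hweak vd hvd vp hvp
end

section
/- Let A be an n×n Hermitian positive definite complex matrix with eigenvalues a_1, ..., a_n (listed with multiplicity), and let T > 0. Then for every positive semidefinite Hermitian matrix X, Re Tr(A X) − T·S_BE(X) ≥ T·Σ_{j=1}^n ln(1 − exp(−a_j/T)), and equality holds if and only if X = (exp(A/T) − I)⁻¹, where exp denotes the matrix exponential and I the identity matrix (exp(A/T) − I is invertible because A is positive definite). -/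
open Matrix
open scoped ComplexOrder

/-- The scalar bosonic entropy `g(x) = (x+1)·ln(x+1) − x·ln x` (with `g 0 = 0`, since
`Real.log 0 = 0` and `0 * Real.log 0 = 0` in Mathlib). -/
noncomputable def gBE (x : ℝ) : ℝ := (x + 1) * Real.log (x + 1) - x * Real.log x

/-- The Bose–Einstein entropy of a matrix: the sum of `gBE` over the eigenvalues if the
matrix is Hermitian, and `0` otherwise (junk value). -/
noncomputable def SBE {m : Type*} [Fintype m] [DecidableEq m] (X : Matrix m m ℂ) : ℝ :=
  if h : X.IsHermitian then ∑ j, gBE (h.eigenvalues j) else 0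

section ScalarLemmas


/-- `F q x = (log(q+1) - log q) * x - gBE x + log (q+1)`. -/
noncomputable def FBE (q x : ℝ) : ℝ :=
  (Real.log (q + 1) - Real.log q) * x - gBE x + Real.log (q + 1)

lemma FBE_self (q : ℝ) : FBE q q = 0 := by
  unfold FBE gBE; ring

lemma FBE_continuous (q : ℝ) : Continuous (FBE q) := by
  unfold FBE gBE
  have h1 : Continuous fun x : ℝ => (x + 1) * Real.log (x + 1) :=
    Real.continuous_mul_log.comp (continuous_id.add continuous_const)
  fun_prop (disch := exact h1)

lemma FBE_hasDerivAt (q : ℝ) {x : ℝ} (hx : 0 < x) :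
    HasDerivAt (FBE q) (Real.log (q + 1) - Real.log q - (Real.log (x + 1) - Real.log x)) x := by
  have h1 : HasDerivAt (fun x : ℝ => (x + 1) * Real.log (x + 1)) (Real.log (x + 1) + 1) x := by
    have := (Real.hasDerivAt_mul_log (x := x + 1) (by linarith)).comp x
      ((hasDerivAt_id x).add_const 1)
    simpa [Function.comp_def] using this
  have h2 : HasDerivAt (fun x : ℝ => x * Real.log x) (Real.log x + 1) x :=
    Real.hasDerivAt_mul_log hx.ne'
  have h3 : HasDerivAt (fun y : ℝ => (Real.log (q + 1) - Real.log q) * y)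
      (Real.log (q + 1) - Real.log q) x := by
    simpa using (hasDerivAt_id x).const_mul (Real.log (q + 1) - Real.log q)
  have := (h3.sub (h1.sub h2)).add_const (Real.log (q + 1))
  refine (this.congr_deriv (by ring)).congr_of_eventuallyEq (Filter.Eventually.of_forall fun y => ?_)
  simp only [FBE, gBE, Pi.sub_apply]

/-- `t ↦ log(t+1) - log t` is strictly decreasing on positives. -/
lemma log_ratio_strictAnti {s t : ℝ} (hs : 0 < s) (hst : s < t) :
    Real.log (t + 1) - Real.log t < Real.log (s + 1) - Real.log s := by
  have ht : 0 < t := hs.trans hst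
  have key : Real.log ((t + 1) * s) < Real.log ((s + 1) * t) := by
    apply Real.log_lt_log (by positivity)
    nlinarith
  rw [Real.log_mul (by positivity) hs.ne', Real.log_mul (by positivity) ht.ne'] at key
  linarith

lemma FBE_pos_of_ne (q : ℝ) (hq : 0 < q) {x : ℝ} (hx : 0 ≤ x) (hne : x ≠ q) :
    0 < FBE q x := by
  rcases lt_or_gt_of_ne hne with h | h
  · -- x < q : F strictly decreasing on [0, q]
    have anti : StrictAntiOn (FBE q) (Set.Icc 0 q) := by
      apply strictAntiOn_of_deriv_neg (convex_Icc 0 q) (FBE_continuous q).continuousOn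
      intro y hy
      rw [interior_Icc] at hy
      rw [(FBE_hasDerivAt q hy.1).deriv]
      have := log_ratio_strictAnti hy.1 hy.2
      linarith
    have := anti ⟨hx, h.le⟩ ⟨hq.le, le_rfl⟩ h
    rwa [FBE_self] at this
  · -- q < x : F strictly increasing on [q, ∞)
    have mono : StrictMonoOn (FBE q) (Set.Ici q) := by
      apply strictMonoOn_of_deriv_pos (convex_Ici q) (FBE_continuous q).continuousOn
      intro y hy
      rw [interior_Ici] at hy
      rw [(FBE_hasDerivAt q (hq.trans hy)).deriv]
      have := log_ratio_strictAnti hq hy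
      linarith
    have := mono (Set.mem_Ici.2 le_rfl) (Set.mem_Ici.2 h.le) h
    rwa [FBE_self] at this

lemma FBE_nonneg (q : ℝ) (hq : 0 < q) {x : ℝ} (hx : 0 ≤ x) : 0 ≤ FBE q x := by
  rcases eq_or_ne x q with rfl | h
  · rw [FBE_self]
  · exact (FBE_pos_of_ne q hq hx h).le

lemma FBE_eq_zero_iff (q : ℝ) (hq : 0 < q) {x : ℝ} (hx : 0 ≤ x) :
    FBE q x = 0 ↔ x = q := by
  constructor
  · intro h
    by_contra hne
    exact (FBE_pos_of_ne q hq hx hne).ne' h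
  · rintro rfl; exact FBE_self _

lemma scaled_FBE (T b : ℝ) (hT : 0 < T) (hb : 0 < b) (x : ℝ) :
    b * x - T * gBE x - T * Real.log (1 - Real.exp (-b / T)) =
      T * FBE ((Real.exp (b / T) - 1)⁻¹) x := by
  have hbT : 0 < b / T := by positivity
  have hE : 1 < Real.exp (b / T) := Real.one_lt_exp_iff.2 hbT
  have hE0 : 0 < Real.exp (b / T) := by positivity
  have hE1 : 0 < Real.exp (b / T) - 1 := sub_pos.2 hE
  have hq1 : (Real.exp (b / T) - 1)⁻¹ + 1 = Real.exp (b / T) / (Real.exp (b / T) - 1) := by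
    field_simp
    ring
  have hlq : Real.log ((Real.exp (b / T) - 1)⁻¹) = -Real.log (Real.exp (b / T) - 1) :=
    Real.log_inv _
  have hlq1 : Real.log ((Real.exp (b / T) - 1)⁻¹ + 1)
      = b / T - Real.log (Real.exp (b / T) - 1) := by
    rw [hq1, Real.log_div hE0.ne' hE1.ne', Real.log_exp]
  have hlog2 : Real.log (1 - Real.exp (-b / T))
      = Real.log (Real.exp (b / T) - 1) - b / T := by
    have h1 : 1 - Real.exp (-b / T) = (Real.exp (b / T) - 1) / Real.exp (b / T) := by
      rw [show -b / T = -(b / T) by ring, Real.exp_neg]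
      field_simp
    rw [h1, Real.log_div hE1.ne' hE0.ne', Real.log_exp]
  unfold FBE
  rw [hlq, hlq1, hlog2]
  field_simp
  ring

noncomputable def sTerm (T b x : ℝ) : ℝ :=
  b * x - T * gBE x - T * Real.log (1 - Real.exp (-b / T))

lemma qpos (T b : ℝ) (hT : 0 < T) (hb : 0 < b) : 0 < (Real.exp (b / T) - 1)⁻¹ := by
  have h1 : 1 < Real.exp (b / T) := Real.one_lt_exp_iff.2 (by positivity)
  have h2 : 0 < Real.exp (b / T) - 1 := sub_pos.2 h1
  positivity

lemma sterm_nonneg (T b x : ℝ) (hT : 0 < T) (hb : 0 < b) (hx : 0 ≤ x) :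
    0 ≤ sTerm T b x := by
  unfold sTerm
  rw [scaled_FBE T b hT hb x]
  exact mul_nonneg hT.le (FBE_nonneg _ (qpos T b hT hb) hx)

lemma sterm_eq_zero_iff (T b x : ℝ) (hT : 0 < T) (hb : 0 < b) (hx : 0 ≤ x) :
    sTerm T b x = 0 ↔ x = (Real.exp (b / T) - 1)⁻¹ := by
  unfold sTerm
  rw [scaled_FBE T b hT hb x, mul_eq_zero]
  constructor
  · rintro (h | h)
    · exact absurd h hT.ne'
    · exact (FBE_eq_zero_iff _ (qpos T b hT hb) hx).1 h
  · intro h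
    exact Or.inr ((FBE_eq_zero_iff _ (qpos T b hT hb) hx).2 h)

end ScalarLemmas

/-- **free-energy minimization; Lemma 2 of the paper.** Let `A ≻ 0` be an
`n × n` Hermitian positive definite matrix with eigenvalues `a_j` and let `T > 0`.  Then
for every positive semidefinite `X`,
`Re Tr(A X) − T·S_BE(X) ≥ T·∑_j ln(1 − exp(−a_j/T))`, with equality if and only if
`X = (exp(A/T) − I)⁻¹` (the Bose–Einstein thermal operator). -/
theorem stmt_3 {n : ℕ} (T : ℝ) (hT : 0 < T) (A : Matrix (Fin n) (Fin n) ℂ) (hA : A.PosDef)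
    (X : Matrix (Fin n) (Fin n) ℂ) (hX : X.PosSemidef) :
    T * ∑ j, Real.log (1 - Real.exp (-(hA.1.eigenvalues j) / T))
        ≤ (Matrix.trace (A * X)).re - T * SBE X ∧
      ((Matrix.trace (A * X)).re - T * SBE X
          = T * ∑ j, Real.log (1 - Real.exp (-(hA.1.eigenvalues j) / T))
        ↔ X = (NormedSpace.exp ((T : ℂ)⁻¹ • A) - 1)⁻¹) := by
  classical
  set a : Fin n → ℝ := hA.1.eigenvalues with ha_def
  set x : Fin n → ℝ := hX.1.eigenvalues with hx_def
  set Vm : Matrix (Fin n) (Fin n) ℂ := (hA.1.eigenvectorUnitary : Matrix (Fin n) (Fin n) ℂ)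
    with hVm_def
  set Um : Matrix (Fin n) (Fin n) ℂ := (hX.1.eigenvectorUnitary : Matrix (Fin n) (Fin n) ℂ)
    with hUm_def
  have hV1 : Vm * star Vm = 1 := Matrix.mem_unitaryGroup_iff.mp hA.1.eigenvectorUnitary.2
  have hV2 : star Vm * Vm = 1 := Matrix.mem_unitaryGroup_iff'.mp hA.1.eigenvectorUnitary.2
  have hU1 : Um * star Um = 1 := Matrix.mem_unitaryGroup_iff.mp hX.1.eigenvectorUnitary.2
  have hU2 : star Um * Um = 1 := Matrix.mem_unitaryGroup_iff'.mp hX.1.eigenvectorUnitary.2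
  set W : Matrix (Fin n) (Fin n) ℂ := star Vm * Um with hW_def
  set Da : Matrix (Fin n) (Fin n) ℂ := Matrix.diagonal (fun j => ((a j : ℝ) : ℂ)) with hDa_def
  set Dx : Matrix (Fin n) (Fin n) ℂ := Matrix.diagonal (fun k => ((x k : ℝ) : ℂ)) with hDx_def
  set t : Fin n → ℝ := fun j => (Real.exp (a j / T) - 1)⁻¹ with ht_def
  set Dt : Matrix (Fin n) (Fin n) ℂ := Matrix.diagonal (fun j => ((t j : ℝ) : ℂ)) with hDt_def
  have hAspec : A = Vm * Da * star Vm := hA.1.spectral_theorem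
  have hXspec : X = Um * Dx * star Um := hX.1.spectral_theorem
  have hstarW : star W = star Um * Vm := by rw [hW_def, Matrix.star_mul, star_star]
  have hWW : W * star W = 1 := by
    rw [hstarW, hW_def, Matrix.mul_assoc, ← Matrix.mul_assoc Um, hU1, Matrix.one_mul, hV2]
  have hWW' : star W * W = 1 := by
    rw [hstarW, hW_def, Matrix.mul_assoc, ← Matrix.mul_assoc Vm, hV1, Matrix.one_mul, hU2]
  have hrow : ∀ j, ∑ k, Complex.normSq (W j k) = 1 := by
    intro j
    have h1 : (W * star W) j j = 1 := by rw [hWW, Matrix.one_apply_eq]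
    rw [Matrix.mul_apply] at h1
    have h2 : (∑ k, (Complex.normSq (W j k) : ℂ)) = 1 := by
      rw [← h1]
      exact Finset.sum_congr rfl fun k _ => by
        rw [Matrix.star_apply, Complex.star_def, Complex.mul_conj]
    have h3 := congrArg Complex.re h2
    rw [Complex.re_sum] at h3
    simpa using h3
  have hcol : ∀ k, ∑ j, Complex.normSq (W j k) = 1 := by
    intro k
    have h1 : (star W * W) k k = 1 := by rw [hWW', Matrix.one_apply_eq]
    rw [Matrix.mul_apply] at h1
    have h2 : (∑ j, (Complex.normSq (W j k) : ℂ)) = 1 := by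
      rw [← h1]
      exact Finset.sum_congr rfl fun j _ => by
        rw [Matrix.star_apply, Complex.star_def, mul_comm, Complex.mul_conj]
    have h3 := congrArg Complex.re h2
    rw [Complex.re_sum] at h3
    simpa using h3
  -- trace formula
  have htr : (Matrix.trace (A * X)).re = ∑ j, ∑ k, a j * x k * Complex.normSq (W j k) := by
    have h0 : A * X = Vm * (Da * (W * (Dx * star W))) * star Vm := by
      rw [hAspec, hXspec, hstarW, hW_def]
      simp only [Matrix.mul_assoc]
      rw [hV1, Matrix.mul_one]
    rw [h0, Matrix.trace_mul_comm, ← Matrix.mul_assoc, hV2, Matrix.one_mul]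
    have hdiag : Matrix.trace (Da * (W * (Dx * star W)))
        = ∑ j, ((a j : ℝ) : ℂ) * (W * (Dx * star W)) j j := by
      simp [Matrix.trace, Matrix.diag, hDa_def, Matrix.diagonal_mul]
    have hWx : ∀ j, (W * (Dx * star W)) j j
        = ∑ k, ((x k : ℝ) : ℂ) * (Complex.normSq (W j k) : ℂ) := by
      intro j
      rw [Matrix.mul_apply]
      refine Finset.sum_congr rfl fun k _ => ?_
      rw [hDx_def, Matrix.diagonal_mul, Matrix.star_apply]
      calc W j k * (((x k : ℝ) : ℂ) * star (W j k))
          = ((x k : ℝ) : ℂ) * (W j k * star (W j k)) := by ring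
        _ = ((x k : ℝ) : ℂ) * (Complex.normSq (W j k) : ℂ) := by
            rw [Complex.star_def, Complex.mul_conj]
    rw [hdiag]
    simp only [hWx]
    have hc : (∑ j, ((a j : ℝ) : ℂ) * ∑ k, ((x k : ℝ) : ℂ) * (Complex.normSq (W j k) : ℂ))
        = ((∑ j, ∑ k, a j * x k * Complex.normSq (W j k) : ℝ) : ℂ) := by
      push_cast
      refine Finset.sum_congr rfl fun j _ => ?_
      rw [Finset.mul_sum]
      exact Finset.sum_congr rfl fun k _ => by ring
    rw [hc, Complex.ofReal_re]
  -- key identity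
  have hSBE : SBE X = ∑ k, gBE (x k) := by
    unfold SBE
    rw [dif_pos hX.1]
  have key : (Matrix.trace (A * X)).re - T * SBE X
      - T * ∑ j, Real.log (1 - Real.exp (-(a j) / T))
      = ∑ j, ∑ k, Complex.normSq (W j k) * sTerm T (a j) (x k) := by
    have expand : ∀ j k, Complex.normSq (W j k) * sTerm T (a j) (x k)
        = Complex.normSq (W j k) * (a j * x k)
          - Complex.normSq (W j k) * (T * gBE (x k))
          - Complex.normSq (W j k) * (T * Real.log (1 - Real.exp (-(a j) / T))) := by
      intro j k; unfold sTerm; ring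
    simp only [expand, Finset.sum_sub_distrib]
    have t1 : ∑ j, ∑ k, Complex.normSq (W j k) * (a j * x k)
        = ∑ j, ∑ k, a j * x k * Complex.normSq (W j k) :=
      Finset.sum_congr rfl fun j _ => Finset.sum_congr rfl fun k _ => by ring
    have t2 : ∑ j, ∑ k, Complex.normSq (W j k) * (T * gBE (x k)) = T * ∑ k, gBE (x k) := by
      rw [Finset.sum_comm, Finset.mul_sum]
      refine Finset.sum_congr rfl fun k _ => ?_
      rw [← Finset.sum_mul, hcol k, one_mul]
    have t3 : ∑ j, ∑ k, Complex.normSq (W j k) * (T * Real.log (1 - Real.exp (-(a j) / T)))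
        = T * ∑ j, Real.log (1 - Real.exp (-(a j) / T)) := by
      rw [Finset.mul_sum]
      refine Finset.sum_congr rfl fun j _ => ?_
      rw [← Finset.sum_mul, hrow j, one_mul]
    rw [t1, t2, t3, htr, hSBE]
  have hsnn : ∀ j k, 0 ≤ sTerm T (a j) (x k) := fun j k =>
    sterm_nonneg T (a j) (x k) hT (hA.eigenvalues_pos j) (hX.eigenvalues_nonneg k)
  have hsumnn : 0 ≤ ∑ j, ∑ k, Complex.normSq (W j k) * sTerm T (a j) (x k) :=
    Finset.sum_nonneg fun j _ => Finset.sum_nonneg fun k _ =>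
      mul_nonneg (Complex.normSq_nonneg _) (hsnn j k)
  constructor
  · linarith [key, hsumnn]
  · -- equality case
    have hZ : (∑ j, ∑ k, Complex.normSq (W j k) * sTerm T (a j) (x k) = 0)
        ↔ W * Dx = Dt * W := by
      rw [← Finset.sum_product']
      rw [Finset.sum_eq_zero_iff_of_nonneg
        (fun p _ => mul_nonneg (Complex.normSq_nonneg _) (hsnn p.1 p.2))]
      constructor
      · intro h
        ext j k
        rw [hDx_def, hDt_def, Matrix.mul_diagonal, Matrix.diagonal_mul]
        rcases mul_eq_zero.1 (h (j, k) (Finset.mem_univ _)) with h0 | h0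
        · rw [Complex.normSq_eq_zero.1 h0]; ring
        · have hxk := (sterm_eq_zero_iff T (a j) (x k) hT (hA.eigenvalues_pos j)
            (hX.eigenvalues_nonneg k)).1 h0
          rw [hxk, ht_def]
          ring
      · intro h p _
        have hjk := congrFun (congrFun h p.1) p.2
        rw [hDx_def, hDt_def, Matrix.mul_diagonal, Matrix.diagonal_mul] at hjk
        rcases eq_or_ne (W p.1 p.2) 0 with h0 | h0
        · rw [h0, Complex.normSq_zero, zero_mul]
        · have hxc : ((x p.2 : ℝ) : ℂ) = ((t p.1 : ℝ) : ℂ) := by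
            rw [mul_comm ((t p.1 : ℝ) : ℂ) (W p.1 p.2)] at hjk
            exact mul_left_cancel₀ h0 hjk
          have hxr : x p.2 = t p.1 := by exact_mod_cast hxc
          have : sTerm T (a p.1) (x p.2) = 0 := by
            rw [sterm_eq_zero_iff T (a p.1) (x p.2) hT (hA.eigenvalues_pos p.1)
              (hX.eigenvalues_nonneg p.2)]
            rw [hxr, ht_def]
          rw [this, mul_zero]
    have hstep : (W * Dx = Dt * W) ↔ X = Vm * Dt * star Vm := by
      constructor
      · intro h
        have hUVW : Um = Vm * W := by
          rw [hW_def, ← Matrix.mul_assoc, hV1, Matrix.one_mul]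
        calc X = Um * Dx * star Um := hXspec
          _ = Vm * W * Dx * (star W * star Vm) := by rw [hUVW, Matrix.star_mul]
          _ = Vm * (W * Dx * star W) * star Vm := by simp only [Matrix.mul_assoc]
          _ = Vm * (Dt * (W * star W)) * star Vm := by
              rw [h]; simp only [Matrix.mul_assoc]
          _ = Vm * Dt * star Vm := by rw [hWW, Matrix.mul_one, Matrix.mul_assoc]
      · intro h
        have h1 : X * Um = Um * Dx := by
          rw [hXspec]
          simp only [Matrix.mul_assoc]
          rw [hU2, Matrix.mul_one]
        have h2 : star Vm * X = Dt * star Vm := by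
          rw [h, ← Matrix.mul_assoc, ← Matrix.mul_assoc, hV2, Matrix.one_mul]
        calc W * Dx = star Vm * (Um * Dx) := by rw [hW_def, Matrix.mul_assoc]
          _ = star Vm * (X * Um) := by rw [h1]
          _ = star Vm * X * Um := by rw [Matrix.mul_assoc]
          _ = Dt * star Vm * Um := by rw [h2]
          _ = Dt * W := by rw [hW_def, Matrix.mul_assoc]
    have hexp : (NormedSpace.exp ((T : ℂ)⁻¹ • A) - 1)⁻¹ = Vm * Dt * star Vm := by
      have hA' : (T : ℂ)⁻¹ • A = Vm * Matrix.diagonal (fun j => ((a j / T : ℝ) : ℂ)) * star Vm := by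
        rw [hAspec]
        have hfun : (fun j => ((a j / T : ℝ) : ℂ)) = (T : ℂ)⁻¹ • fun j => ((a j : ℝ) : ℂ) := by
          funext j
          simp only [Pi.smul_apply, smul_eq_mul]
          push_cast
          ring
        have hd : Matrix.diagonal (fun j => ((a j / T : ℝ) : ℂ)) = (T : ℂ)⁻¹ • Da := by
          rw [hDa_def, ← Matrix.diagonal_smul, ← hfun]
        rw [hd, Matrix.mul_smul, Matrix.smul_mul]
      rw [hA']
      have hVinv : Vm⁻¹ = star Vm := Matrix.inv_eq_right_inv hV1
      have hUnit : IsUnit Vm := ⟨⟨Vm, star Vm, hV1, hV2⟩, rfl⟩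
      rw [← hVinv, Matrix.exp_conj _ _ hUnit, hVinv, Matrix.exp_diagonal]
      have hEfun : (NormedSpace.exp fun j => ((a j / T : ℝ) : ℂ))
          = fun j => ((Real.exp (a j / T) : ℝ) : ℂ) := by
        funext j
        rw [Pi.coe_exp, ← Complex.exp_eq_exp_ℂ, Complex.ofReal_exp]
      rw [hEfun]
      have hsub : Vm * Matrix.diagonal (fun j => ((Real.exp (a j / T) : ℝ) : ℂ)) * star Vm - 1
          = Vm * Matrix.diagonal (fun j => ((Real.exp (a j / T) : ℝ) : ℂ) - 1) * star Vm := by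
        have h1 : (Matrix.diagonal (fun j => ((Real.exp (a j / T) : ℝ) : ℂ) - 1)
            : Matrix (Fin n) (Fin n) ℂ)
            = Matrix.diagonal (fun j => ((Real.exp (a j / T) : ℝ) : ℂ)) - 1 := by
          rw [← Matrix.diagonal_one, Matrix.diagonal_sub]
        rw [h1, Matrix.mul_sub, Matrix.mul_one, Matrix.sub_mul, hV1]
      rw [hsub]
      have hprod : Vm * Matrix.diagonal (fun j => ((Real.exp (a j / T) : ℝ) : ℂ) - 1) * star Vm
          * (Vm * Dt * star Vm) = 1 := by
        have hdd : Matrix.diagonal (fun j => ((Real.exp (a j / T) : ℝ) : ℂ) - 1) * Dt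
            = (1 : Matrix (Fin n) (Fin n) ℂ) := by
          have hfun2 : (fun j => ((((Real.exp (a j / T) : ℝ) : ℂ) - 1) * ((t j : ℝ) : ℂ)))
              = fun _ => (1 : ℂ) := by
            funext j
            have hx0 : (0:ℝ) < a j / T := div_pos (hA.eigenvalues_pos j) hT
            have hne : Real.exp (a j / T) - 1 ≠ 0 := by
              have := Real.one_lt_exp_iff.2 hx0
              linarith
            have hcast : ((Real.exp (a j / T) : ℝ) : ℂ) - 1
                = ((Real.exp (a j / T) - 1 : ℝ) : ℂ) := by push_cast; ring
            simp only [ht_def]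
            rw [hcast, ← Complex.ofReal_mul,
              mul_inv_cancel₀ hne, Complex.ofReal_one]
          rw [hDt_def, Matrix.diagonal_mul_diagonal, hfun2, Matrix.diagonal_one]
        calc Vm * Matrix.diagonal (fun j => ((Real.exp (a j / T) : ℝ) : ℂ) - 1) * star Vm
            * (Vm * Dt * star Vm)
            = Vm * (Matrix.diagonal (fun j => ((Real.exp (a j / T) : ℝ) : ℂ) - 1)
              * (star Vm * Vm) * Dt) * star Vm := by simp only [Matrix.mul_assoc]
          _ = Vm * (Matrix.diagonal (fun j => ((Real.exp (a j / T) : ℝ) : ℂ) - 1) * Dt)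
              * star Vm := by rw [hV2, Matrix.mul_one]
          _ = Vm * star Vm := by rw [hdd, Matrix.mul_one]
          _ = 1 := hV1
      exact Matrix.inv_eq_right_inv hprod
    rw [← sub_eq_zero, key, hexp]
    exact hZ.trans hstep
end

section
/- The Bose–Einstein entropy is concave on the cone of positive semidefinite matrices: for all n×n positive semidefinite Hermitian complex matrices X and Y and every t ∈ [0,1], S_BE(t·X + (1−t)·Y) ≥ t·S_BE(X) + (1−t)·S_BE(Y). -/
open Matrix
open scoped ComplexOrder

lemma gBE_hasDerivAt {x : ℝ} (hx : 0 < x) :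
    HasDerivAt gBE (Real.log (x + 1) - Real.log x) x := by
  have h1 : HasDerivAt (fun y : ℝ => (y + 1) * Real.log (y + 1)) (Real.log (x + 1) + 1) x := by
    have := (Real.hasDerivAt_mul_log (x := x + 1) (by positivity)).comp x
      ((hasDerivAt_id x).add_const 1)
    simpa [Function.comp_def] using this
  have h2 := Real.hasDerivAt_mul_log (ne_of_gt hx)
  have := h1.sub h2
  exact this.congr_deriv (by ring)

lemma gBE_continuous : Continuous gBE := by
  have h := Real.continuous_mul_log
  have : gBE = fun x : ℝ =>
      (fun y => y * Real.log y) (x + 1) - (fun y => y * Real.log y) x := rfl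
  rw [this]
  exact (h.comp (continuous_id.add continuous_const)).sub h

lemma gBE_concaveOn : ConcaveOn ℝ (Set.Ici (0 : ℝ)) gBE := by
  apply AntitoneOn.concaveOn_of_deriv (convex_Ici 0) gBE_continuous.continuousOn
  · rw [interior_Ici]
    exact fun x hx => ((gBE_hasDerivAt hx).differentiableAt).differentiableWithinAt
  · rw [interior_Ici]
    intro a ha b hb hab
    rw [Set.mem_Ioi] at ha hb
    rw [(gBE_hasDerivAt ha).deriv, (gBE_hasDerivAt hb).deriv]
    have h1 : (b + 1) * a ≤ (a + 1) * b := by nlinarith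
    have h2 := Real.log_le_log (by positivity) h1
    rw [Real.log_mul (by positivity) (ne_of_gt ha),
      Real.log_mul (by positivity) (ne_of_gt hb)] at h2
    linarith

/-- Parseval for an orthonormal basis of a complex inner ℂ product space. -/
lemma parseval_onb {E : Type*} [NormedAddCommGroup E] [InnerProductSpace ℂ E]
    {ι : Type*} [Fintype ι] (b : OrthonormalBasis ι ℂ E) (x : E) :
    ∑ k, ‖(inner ℂ (b k) x : ℂ)‖ ^ 2 = ‖x‖ ^ 2 := by
  have h := b.sum_inner_mul_inner x x
  have h2 : ∀ k, (inner ℂ x (b k) * inner ℂ (b k) x : ℂ).re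
      = ‖(inner ℂ (b k) x : ℂ)‖ ^ 2 := by
    intro k
    have hxk : (inner ℂ x (b k) : ℂ) = (starRingEnd ℂ) (inner ℂ (b k) x) := by
      rw [inner_conj_symm]
    rw [hxk, mul_comm, Complex.mul_conj]
    simp [Complex.normSq_eq_norm_sq, ← Complex.ofReal_pow]
  calc ∑ k, ‖(inner ℂ (b k) x : ℂ)‖ ^ 2
      = ∑ k, (inner ℂ x (b k) * inner ℂ (b k) x : ℂ).re := by
        exact Finset.sum_congr rfl fun k _ => (h2 k).symm
    _ = (inner ℂ x x : ℂ).re := by rw [← Complex.re_sum, h]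
    _ = ‖x‖ ^ 2 := by
        rw [← inner_self_eq_norm_sq (𝕜 := ℂ) x]
        rfl

/-- Expansion of a quadratic form of a Hermitian matrix in its eigenbasis. -/
lemma quad_eq_sum {n : ℕ} {A : Matrix (Fin n) (Fin n) ℂ} (hA : A.IsHermitian)
    (v : EuclideanSpace ℂ (Fin n)) :
    (inner ℂ v (Matrix.toEuclideanLin A v) : ℂ).re
      = ∑ k, ‖(inner ℂ (hA.eigenvectorBasis k) v : ℂ)‖ ^ 2 * hA.eigenvalues k := by
  have hT : ∀ k, Matrix.toEuclideanLin A (hA.eigenvectorBasis k)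
      = (hA.eigenvalues k : ℂ) • hA.eigenvectorBasis k := by
    intro k
    have := hA.mulVec_eigenvectorBasis k
    apply (WithLp.equiv 2 (Fin n → ℂ)).injective
    rw [WithLp.equiv_apply, Matrix.ofLp_toEuclideanLin_apply]
    ext i
    have := congrFun this i
    simpa [Complex.real_smul] using this
  have hv : Matrix.toEuclideanLin A v
      = ∑ k, (inner ℂ (hA.eigenvectorBasis k) v : ℂ) •
          ((hA.eigenvalues k : ℂ) • hA.eigenvectorBasis k) := by
    conv_lhs => rw [← hA.eigenvectorBasis.sum_repr' v]
    rw [map_sum]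
    exact Finset.sum_congr rfl fun k _ => by rw [_root_.map_smul, hT k]
  rw [hv, inner_sum, Complex.re_sum]
  refine Finset.sum_congr rfl fun k _ => ?_
  rw [inner_smul_right, inner_smul_right]
  set c : ℂ := (inner ℂ (hA.eigenvectorBasis k) v : ℂ) with hc
  have hvu : (inner ℂ v (hA.eigenvectorBasis k) : ℂ) = (starRingEnd ℂ) c := by
    rw [hc, inner_conj_symm]
  rw [hvu, show c * ((hA.eigenvalues k : ℂ) * (starRingEnd ℂ) c)
      = (c * (starRingEnd ℂ) c) * (hA.eigenvalues k : ℂ) from by ring, Complex.mul_conj,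
    ← Complex.ofReal_mul, Complex.ofReal_re]
  simp [Complex.normSq_eq_norm_sq, ← Complex.ofReal_pow]

/-- Peierls inequality for the function `gBE` and a PSD matrix. -/
lemma peierls {n : ℕ} {A : Matrix (Fin n) (Fin n) ℂ} (hA : A.PosSemidef)
    (b : OrthonormalBasis (Fin n) ℂ (EuclideanSpace ℂ (Fin n))) :
    ∑ k, gBE (hA.1.eigenvalues k)
      ≤ ∑ j, gBE ((inner ℂ (b j) (Matrix.toEuclideanLin A (b j)) : ℂ).re) := by
  set u := hA.1.eigenvectorBasis with hu
  set lam := hA.1.eigenvalues with hlam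
  have hp : ∀ j k, (0 : ℝ) ≤ ‖(inner ℂ (u k) (b j) : ℂ)‖ ^ 2 := fun j k => by positivity
  have hrow : ∀ j, ∑ k, ‖(inner ℂ (u k) (b j) : ℂ)‖ ^ 2 = 1 := by
    intro j
    rw [parseval_onb u (b j)]
    simp [b.orthonormal.1 j]
  have hcol : ∀ k, ∑ j, ‖(inner ℂ (u k) (b j) : ℂ)‖ ^ 2 = 1 := by
    intro k
    have : ∀ j, ‖(inner ℂ (u k) (b j) : ℂ)‖ ^ 2 = ‖(inner ℂ (b j) (u k) : ℂ)‖ ^ 2 := by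
      intro j; rw [norm_inner_symm]
    rw [Finset.sum_congr rfl fun j _ => this j, parseval_onb b (u k)]
    simp [u.orthonormal.1 k]
  have hjensen : ∀ j, ∑ k, ‖(inner ℂ (u k) (b j) : ℂ)‖ ^ 2 * gBE (lam k)
      ≤ gBE ((inner ℂ (b j) (Matrix.toEuclideanLin A (b j)) : ℂ).re) := by
    intro j
    have := gBE_concaveOn.le_map_sum (t := Finset.univ)
      (w := fun k => ‖(inner ℂ (u k) (b j) : ℂ)‖ ^ 2) (p := lam)
      (fun k _ => hp j k) (hrow j) (fun k _ => hA.eigenvalues_nonneg k)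
    rw [quad_eq_sum hA.1 (b j)]
    simpa [smul_eq_mul, mul_comm] using this
  calc ∑ k, gBE (lam k) = ∑ k, (∑ j, ‖(inner ℂ (u k) (b j) : ℂ)‖ ^ 2) * gBE (lam k) := by
        refine Finset.sum_congr rfl fun k _ => ?_
        rw [hcol k, one_mul]
    _ = ∑ j, ∑ k, ‖(inner ℂ (u k) (b j) : ℂ)‖ ^ 2 * gBE (lam k) := by
        rw [Finset.sum_comm]
        refine Finset.sum_congr rfl fun k _ => ?_
        rw [Finset.sum_mul]
    _ ≤ ∑ j, gBE ((inner ℂ (b j) (Matrix.toEuclideanLin A (b j)) : ℂ).re) :=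
        Finset.sum_le_sum fun j _ => hjensen j

/-- **concavity of the Bose–Einstein entropy.** For all `n × n` positive
semidefinite Hermitian complex matrices `X, Y` and every `t ∈ [0,1]`,
`S_BE(t·X + (1−t)·Y) ≥ t·S_BE(X) + (1−t)·S_BE(Y)`. -/
theorem stmt_4 {n : ℕ} (X Y : Matrix (Fin n) (Fin n) ℂ)
    (hX : X.PosSemidef) (hY : Y.PosSemidef) (t : ℝ) (ht0 : 0 ≤ t) (ht1 : t ≤ 1) :
    t * SBE X + (1 - t) * SBE Y ≤ SBE (t • X + (1 - t) • Y) := by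
  set Z := t • X + (1 - t) • Y with hZdef
  have hZ : Z.IsHermitian := by
    unfold Matrix.IsHermitian
    rw [hZdef, conjTranspose_add, conjTranspose_smul, conjTranspose_smul, hX.1, hY.1,
      star_trivial, star_trivial]
  set u := hZ.eigenvectorBasis with hu
  -- quadratic forms
  have hqX : ∀ j, (0 : ℝ) ≤ (inner ℂ (u j) (Matrix.toEuclideanLin X (u j)) : ℂ).re :=
    fun j => by
      rw [EuclideanSpace.inner_eq_star_dotProduct, Matrix.ofLp_toEuclideanLin_apply, dotProduct_comm]
      exact hX.re_dotProduct_nonneg _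
  have hqY : ∀ j, (0 : ℝ) ≤ (inner ℂ (u j) (Matrix.toEuclideanLin Y (u j)) : ℂ).re :=
    fun j => by
      rw [EuclideanSpace.inner_eq_star_dotProduct, Matrix.ofLp_toEuclideanLin_apply, dotProduct_comm]
      exact hY.re_dotProduct_nonneg _
  have hsplit : ∀ j, hZ.eigenvalues j
      = t * (inner ℂ (u j) (Matrix.toEuclideanLin X (u j)) : ℂ).re
        + (1 - t) * (inner ℂ (u j) (Matrix.toEuclideanLin Y (u j)) : ℂ).re := by
    intro j
    have he := hZ.eigenvalues_eq j
    have hlin : Matrix.toEuclideanLin Z (u j)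
        = (t : ℂ) • Matrix.toEuclideanLin X (u j)
          + ((1 - t : ℝ) : ℂ) • Matrix.toEuclideanLin Y (u j) := by
      have h1 : Z = (t : ℂ) • X + ((1 - t : ℝ) : ℂ) • Y := by
        rw [hZdef]
        congr 1
      rw [h1, map_add, _root_.map_smul, _root_.map_smul]
      rfl
    have : (inner ℂ (u j) (Matrix.toEuclideanLin Z (u j)) : ℂ).re
        = t * (inner ℂ (u j) (Matrix.toEuclideanLin X (u j)) : ℂ).re
          + (1 - t) * (inner ℂ (u j) (Matrix.toEuclideanLin Y (u j)) : ℂ).re := by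
      rw [hlin, inner_add_right, inner_smul_right, inner_smul_right, Complex.add_re,
        Complex.re_ofReal_mul, Complex.re_ofReal_mul]
    rw [← this, he, EuclideanSpace.inner_eq_star_dotProduct, Matrix.ofLp_toEuclideanLin_apply,
      dotProduct_comm]
    rfl
  have hZeig : ∀ j, (0 : ℝ) ≤ hZ.eigenvalues j := by
    intro j
    rw [hsplit j]
    have := hqX j; have := hqY j
    nlinarith
  -- concavity pointwise
  have hconc : ∀ j, t * gBE ((inner ℂ (u j) (Matrix.toEuclideanLin X (u j)) : ℂ).re)
      + (1 - t) * gBE ((inner ℂ (u j) (Matrix.toEuclideanLin Y (u j)) : ℂ).re)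
      ≤ gBE (hZ.eigenvalues j) := by
    intro j
    rw [hsplit j]
    have := gBE_concaveOn.2 (Set.mem_Ici.2 (hqX j)) (Set.mem_Ici.2 (hqY j)) ht0
      (by linarith : (0:ℝ) ≤ 1 - t) (by ring)
    simpa [smul_eq_mul] using this
  have hPX := peierls hX u
  have hPY := peierls hY u
  have hSX : SBE X = ∑ k, gBE (hX.1.eigenvalues k) := by
    rw [SBE, dif_pos hX.1]
  have hSY : SBE Y = ∑ k, gBE (hY.1.eigenvalues k) := by
    rw [SBE, dif_pos hY.1]
  have hSZ : SBE Z = ∑ j, gBE (hZ.eigenvalues j) := by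
    rw [SBE, dif_pos hZ]
  rw [hSX, hSY, hSZ]
  calc t * ∑ k, gBE (hX.1.eigenvalues k) + (1 - t) * ∑ k, gBE (hY.1.eigenvalues k)
      ≤ t * ∑ j, gBE ((inner ℂ (u j) (Matrix.toEuclideanLin X (u j)) : ℂ).re)
        + (1 - t) * ∑ j, gBE ((inner ℂ (u j) (Matrix.toEuclideanLin Y (u j)) : ℂ).re) := by
        have h1 := mul_le_mul_of_nonneg_left hPX ht0
        have h2 := mul_le_mul_of_nonneg_left hPY (by linarith : (0:ℝ) ≤ 1 - t)
        linarith
    _ = ∑ j, (t * gBE ((inner ℂ (u j) (Matrix.toEuclideanLin X (u j)) : ℂ).re)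
        + (1 - t) * gBE ((inner ℂ (u j) (Matrix.toEuclideanLin Y (u j)) : ℂ).re)) := by
        rw [Finset.sum_add_distrib, Finset.mul_sum, Finset.mul_sum]
    _ ≤ ∑ j, gBE (hZ.eigenvalues j) := Finset.sum_le_sum fun j _ => hconc j
end

section
/- Let T > 0 and let K be an n×n Hermitian positive definite complex matrix whose eigenvalues (listed with multiplicity) all lie in {λ_min} ∪ [λ_min + Δ, ∞), where λ_min > 0 is the minimum eigenvalue of K, Δ > 0, and exactly d_0 of the n eigenvalues equal λ_min. Then Re Tr[K · (exp(K/T) − I)⁻¹] ≤ T·d_0 + (n − d_0)·(λ_min + Δ)/(e^{(λ_min + Δ)/T} − 1). -/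
open Matrix
open scoped ComplexOrder

set_option maxHeartbeats 1000000

private lemma stmt8_cross (a b : ℝ) (ha : 0 < a) (hab : a ≤ b) :
    b * (Real.exp a - 1) ≤ a * (Real.exp b - 1) := by
  have hc : 0 ≤ b - a := by linarith
  have heq : Real.exp (-a) * Real.exp a = 1 := by rw [← Real.exp_add]; simp
  have h1 : Real.exp a - 1 ≤ a * Real.exp a := by
    nlinarith [Real.add_one_le_exp (-a), Real.exp_pos a]
  have h2 : (b - a) ≤ Real.exp (b - a) - 1 := by linarith [Real.add_one_le_exp (b - a)]
  have h3 : Real.exp b = Real.exp a * Real.exp (b - a) := by rw [← Real.exp_add]; ring_nf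
  nlinarith [mul_le_mul_of_nonneg_left h1 hc,
    mul_le_mul_of_nonneg_left h2 (by positivity : (0:ℝ) ≤ a * Real.exp a)]

private lemma stmt8_exp_sub_one_pos {a : ℝ} (ha : 0 < a) : 0 < Real.exp a - 1 := by
  have := Real.exp_lt_exp.2 ha
  simp only [Real.exp_zero] at this; linarith

private lemma stmt8_g_anti (a b : ℝ) (ha : 0 < a) (hab : a ≤ b) :
    b / (Real.exp b - 1) ≤ a / (Real.exp a - 1) := by
  have hb : 0 < b := lt_of_lt_of_le ha hab
  rw [div_le_div_iff₀ (stmt8_exp_sub_one_pos hb) (stmt8_exp_sub_one_pos ha)]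
  exact stmt8_cross a b ha hab

private lemma stmt8_bound1 (T x : ℝ) (hT : 0 < T) (hx : 0 < x) :
    x / (Real.exp (x / T) - 1) ≤ T := by
  have h : x / T ≤ Real.exp (x / T) - 1 := by linarith [Real.add_one_le_exp (x / T)]
  have hpos : 0 < x / T := div_pos hx hT
  calc x / (Real.exp (x / T) - 1) ≤ x / (x / T) :=
        div_le_div_of_nonneg_left hx.le hpos h
    _ = T := by field_simp

private lemma stmt8_bound2 (T a x : ℝ) (hT : 0 < T) (ha : 0 < a) (hax : a ≤ x) :
    x / (Real.exp (x / T) - 1) ≤ a / (Real.exp (a / T) - 1) := by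
  have key : ∀ y D : ℝ, T * (y / T / D) = y / D := by
    intro y D
    rw [div_div, ← mul_div_assoc, mul_div_mul_left _ _ (ne_of_gt hT)]
  have h := stmt8_g_anti (a / T) (x / T) (div_pos ha hT) (by gcongr)
  have h2 := mul_le_mul_of_nonneg_left h hT.le
  rw [key, key] at h2
  exact h2

/-- **spectral-gap duality-gap bound, Proposition 7.** Let `T > 0` and let
`K ≻ 0` be an `n × n` Hermitian positive definite matrix whose eigenvalues all lie in
`{λ_min} ∪ [λ_min + Δ, ∞)`, where `λ_min > 0` is the minimum eigenvalue of `K`, `Δ > 0`,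
and exactly `d₀` of the `n` eigenvalues equal `λ_min`.  Then
`Re Tr[K·(exp(K/T) − I)⁻¹] ≤ T·d₀ + (n − d₀)·(λ_min + Δ)/(e^{(λ_min+Δ)/T} − 1)`. -/
theorem stmt_8 {n : ℕ} (T : ℝ) (hT : 0 < T)
    (K : Matrix (Fin n) (Fin n) ℂ) (hK : K.PosDef)
    (lmin Δ : ℝ) (hlmin : 0 < lmin) (hΔ : 0 < Δ) (d₀ : ℕ)
    (hmin : ∀ j, lmin ≤ hK.1.eigenvalues j)
    (hspec : ∀ j, hK.1.eigenvalues j = lmin ∨ lmin + Δ ≤ hK.1.eigenvalues j)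
    (hd₀ : Nat.card {j : Fin n // hK.1.eigenvalues j = lmin} = d₀) :
    (Matrix.trace (K * (NormedSpace.exp ((T : ℂ)⁻¹ • K) - 1)⁻¹)).re
      ≤ T * d₀ + ((n : ℝ) - d₀) * ((lmin + Δ) / (Real.exp ((lmin + Δ) / T) - 1)) := by
  classical
  set U : Matrix (Fin n) (Fin n) ℂ := (hK.1.eigenvectorUnitary : Matrix (Fin n) (Fin n) ℂ) with hU
  set ev : Fin n → ℝ := hK.1.eigenvalues with hev
  have hpos : ∀ j, 0 < ev j := fun j => lt_of_lt_of_le hlmin (hmin j)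
  have hUU : star U * U = 1 := mem_unitaryGroup_iff'.mp hK.1.eigenvectorUnitary.2
  have hUU' : U * star U = 1 := mem_unitaryGroup_iff.mp hK.1.eigenvectorUnitary.2
  have hUinv : U⁻¹ = star U := inv_eq_left_inv hUU
  have hUsinv : (star U)⁻¹ = U := inv_eq_right_inv hUU
  have hKspec : K = U * diagonal (fun j => (ev j : ℂ)) * star U := by
    have h := hK.1.spectral_theorem; simp at h; exact h
  set e : Fin n → ℂ := fun j => Complex.exp ((ev j / T : ℝ) : ℂ) with he
  have hne : ∀ j, e j - 1 ≠ 0 := by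
    intro j
    have hje : e j = ((Real.exp (ev j / T) : ℝ) : ℂ) := by rw [he, Complex.ofReal_exp]
    rw [hje]
    have h1 : (1 : ℝ) < Real.exp (ev j / T) := by
      linarith [stmt8_exp_sub_one_pos (div_pos (hpos j) hT)]
    intro hcon
    rw [sub_eq_zero] at hcon
    have : Real.exp (ev j / T) = 1 := by exact_mod_cast hcon
    linarith
  have hdiag : (T : ℂ)⁻¹ • diagonal (fun j => ((ev j : ℝ) : ℂ))
      = diagonal (fun j => ((ev j / T : ℝ) : ℂ)) := by
    ext i j
    by_cases hij : i = j <;> simp [hij, Matrix.diagonal_apply, div_eq_inv_mul]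
  have hscaled : (T : ℂ)⁻¹ • K = U * diagonal (fun j => ((ev j / T : ℝ) : ℂ)) * star U := by
    rw [hKspec, ← smul_mul_assoc, ← mul_smul_comm, hdiag]
  have hexp : NormedSpace.exp ((T : ℂ)⁻¹ • K) = U * diagonal e * star U := by
    rw [hscaled]
    have h := Matrix.exp_units_conj (Unitary.toUnits hK.1.eigenvectorUnitary)
      (diagonal (fun j => ((ev j / T : ℝ) : ℂ)))
    have hcoe : ((Unitary.toUnits hK.1.eigenvectorUnitary :
        (Matrix (Fin n) (Fin n) ℂ)ˣ) : Matrix (Fin n) (Fin n) ℂ) = U := rfl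
    have hcoeinv : (((Unitary.toUnits hK.1.eigenvectorUnitary)⁻¹ :
        (Matrix (Fin n) (Fin n) ℂ)ˣ) : Matrix (Fin n) (Fin n) ℂ) = star U := rfl
    rw [hcoe, hcoeinv] at h
    rw [h, Matrix.exp_diagonal]
    congr 2
    funext j
    rw [Pi.exp_def]
    simp [Complex.exp_eq_exp_ℂ, he]
  have hsub : NormedSpace.exp ((T : ℂ)⁻¹ • K) - 1
      = U * diagonal (fun j => e j - 1) * star U := by
    rw [hexp]
    have h1 : (1 : Matrix (Fin n) (Fin n) ℂ) = U * 1 * star U := by rw [mul_one, hUU']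
    nth_rewrite 1 [h1]
    rw [← Matrix.sub_mul, ← Matrix.mul_sub, ← diagonal_one, diagonal_sub]
  have hdinv : (diagonal (fun j => e j - 1))⁻¹ = diagonal (fun j => (e j - 1)⁻¹) := by
    apply inv_eq_right_inv
    rw [diagonal_mul_diagonal, ← diagonal_one]
    exact congrArg diagonal (funext fun j => mul_inv_cancel₀ (hne j))
  have hinv : (NormedSpace.exp ((T : ℂ)⁻¹ • K) - 1)⁻¹
      = U * diagonal (fun j => (e j - 1)⁻¹) * star U := by
    rw [hsub, Matrix.mul_inv_rev, Matrix.mul_inv_rev, hUinv, hUsinv, hdinv, mul_assoc]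
  have hprod : K * (NormedSpace.exp ((T : ℂ)⁻¹ • K) - 1)⁻¹
      = U * diagonal (fun j => (ev j : ℂ) * (e j - 1)⁻¹) * star U := by
    rw [hinv]
    conv_lhs => rw [hKspec]
    rw [← diagonal_mul_diagonal]
    simp only [mul_assoc]
    rw [← mul_assoc (star U) U, hUU, one_mul]
  have htr : (Matrix.trace (K * (NormedSpace.exp ((T : ℂ)⁻¹ • K) - 1)⁻¹)).re
      = ∑ j, ev j / (Real.exp (ev j / T) - 1) := by
    rw [hprod, Matrix.trace_mul_cycle, hUU, one_mul, trace_diagonal]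
    rw [Complex.re_sum]
    congr 1
    funext j
    have hd : e j - 1 = ((Real.exp (ev j / T) - 1 : ℝ) : ℂ) := by
      rw [he, Complex.ofReal_sub, Complex.ofReal_exp, Complex.ofReal_one]
    rw [hd, ← Complex.ofReal_inv, ← Complex.ofReal_mul, Complex.ofReal_re]
    ring
  rw [htr]
  -- now the real inequality
  set C : ℝ := (lmin + Δ) / (Real.exp ((lmin + Δ) / T) - 1) with hC
  set p : Fin n → Prop := fun j => ev j = lmin with hp
  have hcard : (Finset.univ.filter p).card = d₀ := by
    rw [← hd₀, Nat.card_eq_fintype_card, Fintype.card_subtype]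
  have hd₀n : d₀ ≤ n := by
    rw [← hcard]
    simpa using Finset.card_filter_le Finset.univ p
  have hcard' : (Finset.univ.filter (fun j => ¬ p j)).card = n - d₀ := by
    have h := Finset.card_filter_add_card_filter_not (s := Finset.univ) (p := p)
    simp only [Finset.card_univ, Fintype.card_fin] at h
    omega
  rw [← Finset.sum_filter_add_sum_filter_not Finset.univ p
    (fun j => ev j / (Real.exp (ev j / T) - 1))]
  have h1 : ∑ j ∈ Finset.univ.filter p, ev j / (Real.exp (ev j / T) - 1) ≤ d₀ * T := by
    have := Finset.sum_le_card_nsmul (Finset.univ.filter p)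
      (fun j => ev j / (Real.exp (ev j / T) - 1)) T
      (fun j _ => stmt8_bound1 T (ev j) hT (hpos j))
    rw [hcard] at this
    simpa [nsmul_eq_mul] using this
  have h2 : ∑ j ∈ Finset.univ.filter (fun j => ¬ p j),
      ev j / (Real.exp (ev j / T) - 1) ≤ ((n : ℝ) - d₀) * C := by
    have hb : ∀ j ∈ Finset.univ.filter (fun j => ¬ p j),
        ev j / (Real.exp (ev j / T) - 1) ≤ C := by
      intro j hj
      simp only [Finset.mem_filter] at hj
      rcases hspec j with h | h
      · exact absurd h hj.2
      · exact stmt8_bound2 T (lmin + Δ) (ev j) hT (by linarith) h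
    have := Finset.sum_le_card_nsmul _ _ C hb
    rw [hcard'] at this
    have hcast : ((n - d₀ : ℕ) : ℝ) = (n : ℝ) - d₀ := by
      rw [Nat.cast_sub hd₀n]
    simpa [nsmul_eq_mul, hcast] using this
  linarith
end

section
/- Fix T > 0, n×n Hermitian complex matrices H, Q_1, ..., Q_c, indices i, j ∈ {1,...,c}, and μ ∈ ℝ^c such that K_μ := H − Σ_k μ_k Q_k is positive definite. Then the one-variable function t ↦ Re Tr[(exp(K_{μ + t·e_i}/T) − I)⁻¹ · Q_j] (with e_i the i-th standard basis vector, so K_{μ+t e_i} = K_μ − t·Q_i) is differentiable at t = 0, with derivative (1/T)·∫_0^1 Re Tr[X_T(μ, s) · Q_i · X_T(μ, 1−s) · Q_j] ds, where X_T(μ, s) := exp((s/T)·K_μ) · (exp(K_μ/T) − I)⁻¹. -/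
open Matrix
open scoped ComplexOrder

/-- The interpolated Bose–Einstein thermal operator
`X_T(K, s) = exp((s/T)·K) · (exp(K/T) − I)⁻¹`. -/
noncomputable def XT {m : Type*} [Fintype m] [DecidableEq m]
    (T : ℝ) (K : Matrix m m ℂ) (s : ℝ) : Matrix m m ℂ :=
  NormedSpace.exp (((s / T : ℝ) : ℂ) • K) * (NormedSpace.exp ((T : ℂ)⁻¹ • K) - 1)⁻¹

section Aux

open NormedSpace intervalIntegral

attribute [local instance] Matrix.linftyOpNormedRing Matrix.linftyOpNormedAlgebra

variable {n : ℕ}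

private lemma expDeriv (A : Matrix (Fin n) (Fin n) ℂ) (s : ℝ) :
    HasDerivAt (fun u : ℝ => exp (u • A)) (exp (s • A) * A) s := by
  have := hasDerivAt_exp_smul_const (𝕂 := ℝ) A s
  exact this

private lemma exp_sub_exp (M A : Matrix (Fin n) (Fin n) ℂ) :
    exp M - exp A
      = ∫ s in (0:ℝ)..1, exp (s • M) * (M - A) * exp ((1 - s) • A) := by
  have hderiv : ∀ s ∈ Set.uIcc (0:ℝ) 1,
      HasDerivAt (fun s : ℝ => exp (s • M) * exp ((1 - s) • A))
        (exp (s • M) * (M - A) * exp ((1 - s) • A)) s := by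
    intro s _
    have h1 : HasDerivAt (fun u : ℝ => exp (u • M)) (exp (s • M) * M) s := expDeriv M s
    have h2 : HasDerivAt (fun u : ℝ => exp ((1 - u) • A))
        ((-1 : ℝ) • (exp ((1 - s) • A) * A)) s := by
      have hout := expDeriv A (1 - s)
      have hin : HasDerivAt (fun u : ℝ => 1 - u) (-1 : ℝ) s := by
        simpa using (hasDerivAt_id s).const_sub 1
      exact HasDerivAt.scomp s hout hin
    have := h1.mul h2
    refine this.congr_deriv ?_
    have hc : Commute A (exp ((1 - s) • A)) :=
      ((Commute.refl A).smul_right (1 - s)).exp_right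
    rw [neg_one_smul, mul_neg, ← hc.eq]
    noncomm_ring
  letI : TopologicalSpace (Matrix (Fin n) (Fin n) ℂ) := PseudoMetricSpace.toUniformSpace.toTopologicalSpace
  have hint : IntervalIntegrable
      (fun s : ℝ => exp (s • M) * (M - A) * exp ((1 - s) • A))
      MeasureTheory.volume 0 1 := by
    apply Continuous.intervalIntegrable
    exact ((exp_continuous.comp (continuous_id.smul continuous_const)).mul continuous_const).mul
      (exp_continuous.comp ((continuous_const.sub continuous_id).smul continuous_const))
  have := integral_eq_sub_of_hasDerivAt hderiv hint
  rw [this]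
  simp [exp_zero]

private lemma duhamel (A B : Matrix (Fin n) (Fin n) ℂ) :
    HasDerivAt (fun t : ℝ => exp (A + t • B))
      (∫ s in (0:ℝ)..1, exp (s • A) * B * exp ((1 - s) • A)) 0 := by
  set g : ℝ → Matrix (Fin n) (Fin n) ℂ :=
    fun t => ∫ s in (0:ℝ)..1, exp (s • (A + t • B)) * B * exp ((1 - s) • A) with hg
  have hgc : Continuous g := by
    apply continuous_parametric_intervalIntegral_of_continuous'
    apply Continuous.mul
    · apply Continuous.mul
      · exact exp_continuous.comp
          (continuous_snd.smul (continuous_const.add (continuous_fst.smul continuous_const)))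
      · exact continuous_const
    · exact exp_continuous.comp ((continuous_const.sub continuous_snd).smul continuous_const)
  have key : ∀ t : ℝ, exp (A + t • B) = exp A + t • g t := by
    intro t
    have h0 := exp_sub_exp (A + t • B) A
    simp only [add_sub_cancel_left] at h0
    have h1 : ∀ s : ℝ, exp (s • (A + t • B)) * (t • B) * exp ((1 - s) • A)
        = t • (exp (s • (A + t • B)) * B * exp ((1 - s) • A)) := by
      intro s
      rw [mul_smul_comm, smul_mul_assoc]
    rw [funext h1, integral_smul] at h0
    exact sub_eq_iff_eq_add'.mp h0
  have hg0 : g 0 = ∫ s in (0:ℝ)..1, exp (s • A) * B * exp ((1 - s) • A) := by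
    simp [hg]
  rw [← hg0]
  refine hasDerivAt_iff_tendsto_slope.mpr ?_
  have heq : ∀ t : ℝ, t ≠ 0 → slope (fun t : ℝ => exp (A + t • B)) 0 t = g t := by
    intro t ht
    rw [slope_def_module]
    simp only [key, zero_smul, add_zero, sub_zero]
    rw [add_sub_cancel_left, smul_smul, inv_mul_cancel₀ ht, one_smul]
  apply Filter.Tendsto.congr' _ ((hgc.tendsto 0).mono_left nhdsWithin_le_nhds)
  filter_upwards [self_mem_nhdsWithin] with t ht using (heq t ht).symm

private lemma isUnit_exp_sub_one {K : Matrix (Fin n) (Fin n) ℂ} (hK : K.PosDef)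
    {T : ℝ} (hT : 0 < T) :
    IsUnit (exp ((T : ℂ)⁻¹ • K) - 1) := by
  have hherm := hK.1
  set U : Matrix (Fin n) (Fin n) ℂ := (hherm.eigenvectorUnitary : Matrix (Fin n) (Fin n) ℂ)
  have hUmem := (Matrix.mem_unitaryGroup_iff).mp hherm.eigenvectorUnitary.2
  have hUunit : IsUnit U := (Matrix.isUnit_iff_isUnit_det _).2
    (IsUnit.of_mul_eq_one _ (by rw [← Matrix.det_mul, hUmem, Matrix.det_one]))
  have hUinv : U⁻¹ = star U := Matrix.inv_eq_right_inv hUmem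
  have hspec : (T : ℂ)⁻¹ • K
      = U * Matrix.diagonal (fun k => ((hherm.eigenvalues k / T : ℝ) : ℂ)) * U⁻¹ := by
    rw [hUinv]
    conv_lhs => rw [hherm.spectral_theorem, Unitary.conjStarAlgAut_apply]
    rw [← Matrix.smul_mul, ← Matrix.mul_smul, ← Matrix.diagonal_smul]
    congr 2
    funext j j2
    simp only [Matrix.diagonal_apply, Pi.smul_apply, Function.comp_apply, smul_eq_mul,
      Complex.ofReal_div, div_eq_inv_mul, Complex.ofReal_mul, Complex.ofReal_inv]
    split_ifs <;> rfl
  rw [hspec, Matrix.exp_conj _ _ hUunit, Matrix.exp_diagonal, Pi.exp_def]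
  have h1 : (1 : Matrix (Fin n) (Fin n) ℂ) = U * 1 * U⁻¹ := by
    rw [mul_one, Matrix.mul_nonsing_inv _ ((Matrix.isUnit_iff_isUnit_det _).1 hUunit)]
  rw [h1, ← Matrix.sub_mul, ← Matrix.mul_sub]
  have hUinvUnit : IsUnit (U⁻¹ : Matrix (Fin n) (Fin n) ℂ) := by
    rw [hUinv]; exact hUunit.star
  refine (hUunit.mul ?_).mul hUinvUnit
  have hdiag : (Matrix.diagonal fun k => exp ((hherm.eigenvalues k / T : ℝ) : ℂ))
      - (1 : Matrix (Fin n) (Fin n) ℂ)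
      = Matrix.diagonal (fun k => exp ((hherm.eigenvalues k / T : ℝ) : ℂ) - 1) := by
    rw [← Matrix.diagonal_one, Matrix.diagonal_sub]
  rw [hdiag]
  apply (Matrix.isUnit_iff_isUnit_det _).2
  rw [Matrix.det_diagonal, isUnit_iff_ne_zero]
  apply Finset.prod_ne_zero_iff.2
  intro k _
  rw [sub_ne_zero]
  rw [← Complex.exp_eq_exp_ℂ, ← Complex.ofReal_exp]
  intro h
  have : Real.exp (hherm.eigenvalues k / T) = 1 := by exact_mod_cast h
  have hpos : 0 < hherm.eigenvalues k / T := div_pos (hK.eigenvalues_pos k) hT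
  linarith [Real.one_lt_exp_iff.mpr hpos]

end Aux

set_option maxHeartbeats 2000000 in
/-- **Hessian elements of the dual objective, Proposition 9.** Fix `T > 0`,
Hermitian `H, Q 1, ..., Q c`, indices `i, j`, and `μ ∈ ℝ^c` with
`K_μ := H − ∑ k μ k • Q k ≻ 0`.  Then `t ↦ Re Tr[(exp(K_{μ+t·e_i}/T) − I)⁻¹ · Q j]` is
differentiable at `t = 0` with derivative
`(1/T)·∫_0^1 Re Tr[X_T(μ,s)·Q i·X_T(μ,1−s)·Q j] ds`. -/
theorem stmt_10 {n c : ℕ} (T : ℝ) (hT : 0 < T)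
    (H : Matrix (Fin n) (Fin n) ℂ) (Q : Fin c → Matrix (Fin n) (Fin n) ℂ)
    (hH : H.IsHermitian) (hQ : ∀ i, (Q i).IsHermitian)
    (i j : Fin c) (μ : Fin c → ℝ) (hK : (H - ∑ k, μ k • Q k).PosDef) :
    HasDerivAt (fun t : ℝ =>
        (Matrix.trace ((NormedSpace.exp
          ((T : ℂ)⁻¹ • (H - ∑ k, (μ + t • (Pi.single i 1 : Fin c → ℝ)) k • Q k)) - 1)⁻¹
          * Q j)).re)
      ((1 / T) * ∫ s in (0:ℝ)..1,
        (Matrix.trace (XT T (H - ∑ k, μ k • Q k) s * Q i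
          * XT T (H - ∑ k, μ k • Q k) (1 - s) * Q j)).re)
      0 := by
  classical
  letI : NormedRing (Matrix (Fin n) (Fin n) ℂ) := Matrix.linftyOpNormedRing
  letI : NormedAlgebra ℂ (Matrix (Fin n) (Fin n) ℂ) := Matrix.linftyOpNormedAlgebra
  set K : Matrix (Fin n) (Fin n) ℂ := H - ∑ k, μ k • Q k with hKdef
  set A : Matrix (Fin n) (Fin n) ℂ := (T : ℂ)⁻¹ • K with hAdef
  set B : Matrix (Fin n) (Fin n) ℂ := -((T : ℂ)⁻¹ • Q i) with hBdef
  obtain ⟨u, hu⟩ := isUnit_exp_sub_one hK hT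
  -- `hu : ↑u = NormedSpace.exp A - 1`
  haveI : FiniteDimensional ℝ (Matrix (Fin n) (Fin n) ℂ) := by
    exact Module.Finite.trans ℂ (Matrix (Fin n) (Fin n) ℂ)
  -- Step 1: rewrite the argument of exp
  have hfun : ∀ t : ℝ,
      (T : ℂ)⁻¹ • (H - ∑ k, ((μ + t • (Pi.single i 1 : Fin c → ℝ)) k) • Q k) = A + t • B := by
    intro t
    have h2 : ∑ k, ((μ + t • (Pi.single i 1 : Fin c → ℝ)) k) • Q k
        = (∑ k, μ k • Q k) + t • Q i := by
      have hterm : ∀ k, ((μ + t • (Pi.single i 1 : Fin c → ℝ)) k) • Q k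
          = μ k • Q k + (t * (Pi.single i 1 : Fin c → ℝ) k) • Q k := by
        intro k
        simp [add_smul]
      rw [Finset.sum_congr rfl fun k _ => hterm k, Finset.sum_add_distrib]
      congr 1
      rw [Finset.sum_eq_single i]
      · simp
      · intro k _ hk
        simp [Pi.single_eq_of_ne hk]
      · simp
    rw [h2]
    rw [sub_add_eq_sub_sub, ← hKdef, smul_sub, hAdef, hBdef]
    rw [smul_comm ((T:ℂ)⁻¹) t (Q i)]
    rw [smul_neg, sub_eq_add_neg]
  -- the inverse of the unit as a matrix
  set iu : Matrix (Fin n) (Fin n) ℂ := ↑u⁻¹ with hiu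
  -- continuous linear maps
  let L : Matrix (Fin n) (Fin n) ℂ →L[ℝ] ℝ := LinearMap.toContinuousLinearMap
    { toFun := fun X => (Matrix.trace (X * Q j)).re
      map_add' := fun X Y => by simp [Matrix.add_mul]
      map_smul' := fun r X => by
        simp [Matrix.smul_mul, Matrix.trace_smul, Complex.real_smul] }
  let L₂ : Matrix (Fin n) (Fin n) ℂ →L[ℝ] ℝ := LinearMap.toContinuousLinearMap
    { toFun := fun X => (Matrix.trace (iu * X * iu * Q j)).re
      map_add' := fun X Y => by simp [Matrix.mul_add, Matrix.add_mul]
      map_smul' := fun r X => by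
        simp [Matrix.mul_smul, Matrix.smul_mul, Matrix.trace_smul, Complex.real_smul] }
  -- the Duhamel derivative
  have hD := duhamel A B
  set D : Matrix (Fin n) (Fin n) ℂ :=
    ∫ s in (0:ℝ)..1, NormedSpace.exp (s • A) * B * NormedSpace.exp ((1 - s) • A) with hDdef
  have hM : HasDerivAt (fun t : ℝ => NormedSpace.exp (A + t • B) - 1) D 0 := hD.sub_const 1
  have h0 : NormedSpace.exp (A + (0:ℝ) • B) - 1 = (↑u : Matrix (Fin n) (Fin n) ℂ) := by
    rw [hu]; simp; rfl
  have hl : HasFDerivAt (Ring.inverse : Matrix (Fin n) (Fin n) ℂ → Matrix (Fin n) (Fin n) ℂ)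
      (-(ContinuousLinearMap.mulLeftRight ℝ (Matrix (Fin n) (Fin n) ℂ) iu iu))
      (NormedSpace.exp (A + (0:ℝ) • B) - 1) := by
    rw [h0]
    exact hasFDerivAt_ringInverse u
  have hinvd : HasDerivAt
      (fun t : ℝ => Ring.inverse (NormedSpace.exp (A + t • B) - 1))
      ((-(ContinuousLinearMap.mulLeftRight ℝ (Matrix (Fin n) (Fin n) ℂ) iu iu)) D) 0 :=
    by have h := hl.comp_hasDerivAt 0 hM; exact h
  have hfull := L.hasFDerivAt.comp_hasDerivAt 0 hinvd
  -- rewrite the function in the goal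
  have hfeq : (fun t : ℝ =>
      (Matrix.trace ((NormedSpace.exp
        ((T : ℂ)⁻¹ • (H - ∑ k, (μ + t • (Pi.single i 1 : Fin c → ℝ)) k • Q k)) - 1)⁻¹
        * Q j)).re)
      = fun t : ℝ => L (Ring.inverse (NormedSpace.exp (A + t • B) - 1)) := by
    funext t
    rw [hfun t, Matrix.nonsing_inv_eq_ringInverse]
    rfl
  rw [hfeq]
  refine HasDerivAt.congr_deriv hfull (Eq.symm ?_)
  -- Now compute the value.
  rw [← hAdef] at hu
  have hcommA : ∀ r : ℝ,
      Commute (NormedSpace.exp (r • A)) (↑u : Matrix (Fin n) (Fin n) ℂ) := by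
    intro r
    rw [hu]
    exact (((Commute.refl A).smul_left r).exp).sub_right (Commute.one_right _)
  have hcomm' : ∀ r : ℝ, Commute (NormedSpace.exp (r • A)) iu := by
    intro r
    rw [hiu]
    exact (hcommA r).units_inv_right
  have hsA : ∀ r : ℝ, (((r / T : ℝ)) : ℂ) • K = r • A := by
    intro r
    rw [hAdef, Complex.ofReal_div, div_eq_mul_inv, ← smul_smul,
      ← Complex.coe_algebraMap, algebraMap_smul]
  have hXT : ∀ r : ℝ, XT T K r = NormedSpace.exp (r • A) * iu := by
    intro r
    simp only [XT]
    rw [hsA r, ← hAdef, ← hu, Matrix.nonsing_inv_eq_ringInverse, Ring.inverse_unit, hiu]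
  have hcont : Continuous
      (fun s : ℝ => NormedSpace.exp (s • A) * B * NormedSpace.exp ((1 - s) • A)) := by
    letI : NormedAlgebra ℚ (Matrix (Fin n) (Fin n) ℂ) := Matrix.linftyOpNormedAlgebra
    exact ((NormedSpace.exp_continuous.comp (continuous_id.smul continuous_const)).mul
        continuous_const).mul
      (NormedSpace.exp_continuous.comp
        ((continuous_const.sub continuous_id).smul continuous_const))
  letI : TopologicalSpace (Matrix (Fin n) (Fin n) ℂ) := PseudoMetricSpace.toUniformSpace.toTopologicalSpace
  have hint : IntervalIntegrable
      (fun s : ℝ => NormedSpace.exp (s • A) * B * NormedSpace.exp ((1 - s) • A))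
      MeasureTheory.volume 0 1 := by
    apply Continuous.intervalIntegrable
    exact hcont
  have hstep1 : L ((-(ContinuousLinearMap.mulLeftRight ℝ (Matrix (Fin n) (Fin n) ℂ) iu iu)) D)
      = -(L₂ D) := by
    simp only [ContinuousLinearMap.neg_apply, ContinuousLinearMap.mulLeftRight_apply, map_neg]
    rfl
  have hpt : ∀ s : ℝ,
      -(L₂ (NormedSpace.exp (s • A) * B * NormedSpace.exp ((1 - s) • A)))
      = (1 / T) * (Matrix.trace (XT T K s * Q i * XT T K (1 - s) * Q j)).re := by
    intro s
    rw [hXT s, hXT (1 - s)]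
    have happ : L₂ (NormedSpace.exp (s • A) * B * NormedSpace.exp ((1 - s) • A))
        = (Matrix.trace (iu * (NormedSpace.exp (s • A) * B
            * NormedSpace.exp ((1 - s) • A)) * iu * Q j)).re := rfl
    rw [happ]
    have hmat : iu * (NormedSpace.exp (s • A) * B * NormedSpace.exp ((1 - s) • A)) * iu * Q j
        = -((T : ℂ)⁻¹ • (NormedSpace.exp (s • A) * iu * Q i
            * (NormedSpace.exp ((1 - s) • A) * iu) * Q j)) := by
      rw [hBdef]
      simp only [mul_neg, neg_mul, mul_smul_comm, smul_mul_assoc, neg_inj]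
      congr 1
      have h1 := (hcomm' s).eq
      have h2 := (hcomm' (1 - s)).eq
      have hassoc : iu * (NormedSpace.exp (s • A) * Q i * NormedSpace.exp ((1 - s) • A))
            * iu * Q j
          = iu * NormedSpace.exp (s • A) * Q i
            * (NormedSpace.exp ((1 - s) • A) * iu) * Q j := by
        noncomm_ring
      rw [hassoc]; erw [← h1]; rfl
    rw [hmat, Matrix.trace_neg, Matrix.trace_smul, Complex.neg_re, neg_neg, smul_eq_mul,
      ← Complex.ofReal_inv, Complex.re_ofReal_mul, one_div]
    rfl
  calc (1 / T) * ∫ s in (0:ℝ)..1,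
        (Matrix.trace (XT T K s * Q i * XT T K (1 - s) * Q j)).re
      = ∫ s in (0:ℝ)..1,
          (1 / T) * (Matrix.trace (XT T K s * Q i * XT T K (1 - s) * Q j)).re := by
        rw [intervalIntegral.integral_const_mul]
    _ = ∫ s in (0:ℝ)..1,
          -(L₂ (NormedSpace.exp (s • A) * B * NormedSpace.exp ((1 - s) • A))) := by
        apply intervalIntegral.integral_congr
        intro s _
        exact (hpt s).symm
    _ = -(∫ s in (0:ℝ)..1,
          L₂ (NormedSpace.exp (s • A) * B * NormedSpace.exp ((1 - s) • A))) := by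
        rw [intervalIntegral.integral_neg]
    _ = -(L₂ D) := by rw [hDdef]; exact congrArg Neg.neg (L₂.intervalIntegral_comp_comm hint)
    _ = L ((-(ContinuousLinearMap.mulLeftRight ℝ (Matrix (Fin n) (Fin n) ℂ) iu iu)) D) :=
        hstep1.symm
end

section
/- Let X and Y be n×n Hermitian positive definite complex matrices. Then the Bose–Einstein relative entropy satisfies D_BE(X‖Y) ≥ 0, and D_BE(X‖Y) = 0 if and only if X = Y. -/
open Matrix
open scoped ComplexOrder

/-- The matrix logarithm of a Hermitian matrix, via the continuous functional calculus,
i.e. by applying `Real.log` to the eigenvalues in a spectral decomposition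
(junk value `0` on non-Hermitian matrices). -/
noncomputable def matLog {m : Type*} [Fintype m] [DecidableEq m]
    (X : Matrix m m ℂ) : Matrix m m ℂ :=
  if h : X.IsHermitian then
    (h.eigenvectorUnitary : Matrix m m ℂ) *
      Matrix.diagonal (fun i => (Real.log (h.eigenvalues i) : ℂ)) *
      star (h.eigenvectorUnitary : Matrix m m ℂ)
  else 0

/-- The Bose–Einstein relative entropy
`D_BE(X‖Y) = −S_BE(X) + Re Tr[(X+I)·ln(Y+I) − X·ln Y]`. -/
noncomputable def DBE {m : Type*} [Fintype m] [DecidableEq m] (X Y : Matrix m m ℂ) : ℝ :=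
  -SBE X + (Matrix.trace ((X + 1) * matLog (Y + 1) - X * matLog Y)).re

section ScalarAux

/-- The pointwise Bose–Einstein relative entropy kernel. -/
noncomputable def hBE (x y : ℝ) : ℝ :=
  (x + 1) * Real.log (y + 1) - x * Real.log y - gBE x

lemma hBE_self (x : ℝ) : hBE x x = 0 := by
  simp only [hBE, gBE]; ring

lemma hBE_pos {x y : ℝ} (hx : 0 < x) (hy : 0 < y) (hne : x ≠ y) : 0 < hBE x y := by
  have hx1 : (0:ℝ) < x + 1 := by linarith
  have hy1 : (0:ℝ) < y + 1 := by linarith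
  have ha : (0:ℝ) < x / (x + 1) := div_pos hx hx1
  have hb : (0:ℝ) < 1 / (x + 1) := by positivity
  have hab : x / (x + 1) + 1 / (x + 1) = 1 := by field_simp
  have hu : y / x ∈ Set.Ioi (0:ℝ) := div_pos hy hx
  have hv : (1:ℝ) ∈ Set.Ioi (0:ℝ) := Set.mem_Ioi.mpr one_pos
  have hne1 : y / x ≠ 1 := by
    intro h
    rw [div_eq_one_iff_eq hx.ne'] at h
    exact hne h.symm
  have key := strictConcaveOn_log_Ioi.2 hu hv hne1 ha hb hab
  rw [smul_eq_mul, smul_eq_mul, smul_eq_mul, smul_eq_mul, Real.log_one, mul_zero, add_zero] at key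
  have harg : x / (x + 1) * (y / x) + 1 / (x + 1) * 1 = (y + 1) / (x + 1) := by
    field_simp
  rw [harg, Real.log_div hy.ne' hx.ne', Real.log_div hy1.ne' hx1.ne'] at key
  have key2 : x * (Real.log y - Real.log x) < (x + 1) * (Real.log (y + 1) - Real.log (x + 1)) := by
    have h3 := (mul_lt_mul_iff_right₀ hx1).2 key
    calc x * (Real.log y - Real.log x)
        = (x + 1) * (x / (x + 1) * (Real.log y - Real.log x)) := by
          rw [← mul_assoc, mul_div_cancel₀ _ hx1.ne']
      _ < (x + 1) * (Real.log (y + 1) - Real.log (x + 1)) := h3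
  simp only [hBE, gBE]
  nlinarith [key2]

lemma hBE_nonneg {x y : ℝ} (hx : 0 < x) (hy : 0 < y) : 0 ≤ hBE x y := by
  rcases eq_or_ne x y with h | h
  · rw [h, hBE_self]
  · exact (hBE_pos hx hy h).le

end ScalarAux

section MatrixAux
variable {m : Type*} [Fintype m] [DecidableEq m]

lemma spectral' {A : Matrix m m ℂ} (hA : A.IsHermitian) :
    A = (hA.eigenvectorUnitary : Matrix m m ℂ) * diagonal (fun i => (hA.eigenvalues i : ℂ)) *
      star (hA.eigenvectorUnitary : Matrix m m ℂ) := hA.spectral_theorem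

lemma conj_eq_iff_comm (U V : Matrix.unitaryGroup m ℂ) (A B : Matrix m m ℂ) :
    (U : Matrix m m ℂ) * A * star (U : Matrix m m ℂ) =
      (V : Matrix m m ℂ) * B * star (V : Matrix m m ℂ) ↔
    A * (star (U : Matrix m m ℂ) * (V : Matrix m m ℂ)) =
      (star (U : Matrix m m ℂ) * (V : Matrix m m ℂ)) * B := by
  have hU1 : star (U : Matrix m m ℂ) * (U : Matrix m m ℂ) = 1 := UnitaryGroup.star_mul_self U
  have hU2 : (U : Matrix m m ℂ) * star (U : Matrix m m ℂ) = 1 := U.2.2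
  have hV1 : star (V : Matrix m m ℂ) * (V : Matrix m m ℂ) = 1 := UnitaryGroup.star_mul_self V
  have hV2 : (V : Matrix m m ℂ) * star (V : Matrix m m ℂ) = 1 := V.2.2
  constructor
  · intro h
    calc A * (star (U : Matrix m m ℂ) * ↑V)
        = star (U : Matrix m m ℂ) * ↑U * A * (star (U : Matrix m m ℂ) * ↑V) := by
          rw [hU1, one_mul]
      _ = star (U : Matrix m m ℂ) * ((U : Matrix m m ℂ) * A * star ↑U) * ↑V := by
          simp only [mul_assoc]
      _ = star (U : Matrix m m ℂ) * ((V : Matrix m m ℂ) * B * star ↑V) * ↑V := by rw [h]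
      _ = (star (U : Matrix m m ℂ) * ↑V) * B * (star (V : Matrix m m ℂ) * ↑V) := by
          simp only [mul_assoc]
      _ = (star (U : Matrix m m ℂ) * ↑V) * B := by rw [hV1, mul_one]
  · intro h
    calc (U : Matrix m m ℂ) * A * star ↑U
        = (U : Matrix m m ℂ) * A * star ↑U * (↑V * star (V : Matrix m m ℂ)) := by
          rw [hV2, mul_one]
      _ = (U : Matrix m m ℂ) * (A * (star (U : Matrix m m ℂ) * ↑V)) * star ↑V := by
          simp only [mul_assoc]
      _ = (U : Matrix m m ℂ) * ((star (U : Matrix m m ℂ) * ↑V) * B) * star ↑V := by rw [h]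
      _ = ((U : Matrix m m ℂ) * star ↑U) * (↑V * B * star (V : Matrix m m ℂ)) := by
          simp only [mul_assoc]
      _ = (V : Matrix m m ℂ) * B * star ↑V := by rw [hU2, one_mul]

lemma diag_comm_iff (a b : m → ℝ) (M : Matrix m m ℂ) :
    diagonal (fun i => (a i : ℂ)) * M = M * diagonal (fun j => (b j : ℂ)) ↔
      ∀ i j, (a i : ℂ) * M i j = M i j * (b j : ℂ) := by
  constructor
  · intro h i j
    have := congrFun (congrFun h i) j
    simpa [diagonal_mul, mul_diagonal] using this
  · intro h
    ext i j
    simp only [diagonal_mul, mul_diagonal]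
    exact h i j

lemma diag_comm_map (f : ℝ → ℝ) {a b : m → ℝ} {M : Matrix m m ℂ}
    (h : diagonal (fun i => (a i : ℂ)) * M = M * diagonal (fun j => (b j : ℂ))) :
    diagonal (fun i => (f (a i) : ℂ)) * M = M * diagonal (fun j => (f (b j) : ℂ)) := by
  rw [diag_comm_iff] at h ⊢
  intro i j
  by_cases hw : M i j = 0
  · simp [hw]
  · have hab : (a i : ℂ) = (b j : ℂ) := by
      have h' := h i j
      rw [mul_comm (M i j)] at h'
      exact mul_right_cancel₀ hw h'
    have : a i = b j := by exact_mod_cast hab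
    rw [this, mul_comm]

lemma matLog_unitary_conj (V : Matrix.unitaryGroup m ℂ) (d : m → ℝ) :
    matLog ((V : Matrix m m ℂ) * diagonal (fun i => (d i : ℂ)) * star (V : Matrix m m ℂ)) =
      (V : Matrix m m ℂ) * diagonal (fun i => (Real.log (d i) : ℂ)) *
        star (V : Matrix m m ℂ) := by
  have hd : (diagonal (fun i => (d i : ℂ))).IsHermitian := by
    refine isHermitian_diagonal_of_self_adjoint _ ?_
    ext i
    simp [Pi.star_apply, Complex.conj_ofReal]
  have hM : ((V : Matrix m m ℂ) * diagonal (fun i => (d i : ℂ)) *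
      star (V : Matrix m m ℂ)).IsHermitian := by
    rw [Matrix.star_eq_conjTranspose]
    exact isHermitian_mul_mul_conjTranspose _ hd
  simp only [matLog, dif_pos hM]
  rw [conj_eq_iff_comm]
  exact diag_comm_map Real.log ((conj_eq_iff_comm _ _ _ _).mp (spectral' hM).symm)

lemma trace_conj_mul_re (U V : Matrix.unitaryGroup m ℂ) (a b : m → ℝ) :
    (trace (((U : Matrix m m ℂ) * diagonal (fun i => (a i : ℂ)) * star (U : Matrix m m ℂ)) *
      ((V : Matrix m m ℂ) * diagonal (fun j => (b j : ℂ)) * star (V : Matrix m m ℂ)))).re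
    = ∑ i, ∑ j, a i * b j *
        Complex.normSq ((star (U : Matrix m m ℂ) * (V : Matrix m m ℂ)) i j) := by
  set W : Matrix m m ℂ := star (U : Matrix m m ℂ) * (V : Matrix m m ℂ) with hW
  have hU1 : star (U : Matrix m m ℂ) * (U : Matrix m m ℂ) = 1 := UnitaryGroup.star_mul_self U
  have hU2 : (U : Matrix m m ℂ) * star (U : Matrix m m ℂ) = 1 := U.2.2
  have h1 : ((U : Matrix m m ℂ) * diagonal (fun i => (a i : ℂ)) * star (U : Matrix m m ℂ)) *
      ((V : Matrix m m ℂ) * diagonal (fun j => (b j : ℂ)) * star (V : Matrix m m ℂ)) =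
      (U : Matrix m m ℂ) * (diagonal (fun i => (a i : ℂ)) *
        (W * diagonal (fun j => (b j : ℂ)) * star W)) * star (U : Matrix m m ℂ) := by
    rw [hW]
    simp only [Matrix.star_mul, star_star, mul_assoc, hU2, mul_one]
  rw [h1]
  rw [trace_mul_cycle, ← mul_assoc, hU1, one_mul]
  rw [Matrix.trace]
  rw [Complex.re_sum]
  refine Finset.sum_congr rfl fun i _ => ?_
  have h2 : (diagonal (fun i => (a i : ℂ)) * (W * diagonal (fun j => (b j : ℂ)) * star W)).diag i
      = ∑ j, (a i : ℂ) * ((b j : ℂ) * (Complex.normSq (W i j) : ℂ)) := by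
    rw [Matrix.diag_apply, Matrix.diagonal_mul, Matrix.mul_apply, Finset.mul_sum]
    refine Finset.sum_congr rfl fun j _ => ?_
    rw [Matrix.mul_diagonal, Matrix.star_apply, Complex.star_def, ← Complex.mul_conj]
    ring
  rw [h2, Complex.re_sum]
  refine Finset.sum_congr rfl fun j _ => ?_
  simp [Complex.ofReal_mul]
  ring

lemma row_sum_normSq (U V : Matrix.unitaryGroup m ℂ) (i : m) :
    ∑ j, Complex.normSq ((star (U : Matrix m m ℂ) * (V : Matrix m m ℂ)) i j) = 1 := by
  set W : Matrix m m ℂ := star (U : Matrix m m ℂ) * (V : Matrix m m ℂ) with hW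
  have h1 : W * star W = 1 := by
    calc W * star W = star (U : Matrix m m ℂ) * ((V : Matrix m m ℂ) * star (V : Matrix m m ℂ)) *
          (U : Matrix m m ℂ) := by
          rw [hW, Matrix.star_mul, star_star]; simp only [mul_assoc]
      _ = 1 := by rw [V.2.2, mul_one, UnitaryGroup.star_mul_self]
  have h2 := congrFun (congrFun h1 i) i
  rw [Matrix.mul_apply] at h2
  simp only [Matrix.star_apply, Complex.star_def, Complex.mul_conj, Matrix.one_apply_eq] at h2
  exact_mod_cast h2

/-- Master formula: the Bose–Einstein relative entropy as a doubly indexed sum of the scalar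
kernel weighted by the (doubly stochastic) squared overlaps of the two eigenbases. -/
lemma DBE_eq_sum {X Y : Matrix m m ℂ} (hX : X.PosDef) (hY : Y.PosDef) :
    DBE X Y = ∑ i, ∑ j,
      Complex.normSq ((star (hX.isHermitian.eigenvectorUnitary : Matrix m m ℂ) *
        (hY.isHermitian.eigenvectorUnitary : Matrix m m ℂ)) i j) *
      hBE (hX.isHermitian.eigenvalues i) (hY.isHermitian.eigenvalues j) := by
  have hXh : X.IsHermitian := hX.isHermitian
  have hYh : Y.IsHermitian := hY.isHermitian
  set U := hXh.eigenvectorUnitary with hUdef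
  set V := hYh.eigenvectorUnitary with hVdef
  set x : m → ℝ := hXh.eigenvalues with hxdef
  set y : m → ℝ := hYh.eigenvalues with hydef
  set W : Matrix m m ℂ := star (U : Matrix m m ℂ) * (V : Matrix m m ℂ) with hW
  have hX1 : X + 1 = (U : Matrix m m ℂ) * diagonal (fun i => ((x i + 1 : ℝ) : ℂ)) *
      star (U : Matrix m m ℂ) := by
    have h1 : (1 : Matrix m m ℂ) = (U : Matrix m m ℂ) * 1 * star (U : Matrix m m ℂ) := by
      rw [mul_one, U.2.2]
    calc X + 1 = (U : Matrix m m ℂ) * diagonal (fun i => (x i : ℂ)) * star (U : Matrix m m ℂ)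
          + (U : Matrix m m ℂ) * 1 * star (U : Matrix m m ℂ) := by
          rw [← h1, ← spectral' hXh]
      _ = (U : Matrix m m ℂ) * (diagonal (fun i => (x i : ℂ)) + 1) * star (U : Matrix m m ℂ) := by
          rw [mul_add, add_mul]
      _ = (U : Matrix m m ℂ) * diagonal (fun i => ((x i + 1 : ℝ) : ℂ)) *
          star (U : Matrix m m ℂ) := by
          rw [← diagonal_one, diagonal_add]
          push_cast
          rfl
  have hY1 : Y + 1 = (V : Matrix m m ℂ) * diagonal (fun j => ((y j + 1 : ℝ) : ℂ)) *
      star (V : Matrix m m ℂ) := by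
    have h1 : (1 : Matrix m m ℂ) = (V : Matrix m m ℂ) * 1 * star (V : Matrix m m ℂ) := by
      rw [mul_one, V.2.2]
    calc Y + 1 = (V : Matrix m m ℂ) * diagonal (fun j => (y j : ℂ)) * star (V : Matrix m m ℂ)
          + (V : Matrix m m ℂ) * 1 * star (V : Matrix m m ℂ) := by
          rw [← h1, ← spectral' hYh]
      _ = (V : Matrix m m ℂ) * (diagonal (fun j => (y j : ℂ)) + 1) * star (V : Matrix m m ℂ) := by
          rw [mul_add, add_mul]
      _ = (V : Matrix m m ℂ) * diagonal (fun j => ((y j + 1 : ℝ) : ℂ)) *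
          star (V : Matrix m m ℂ) := by
          rw [← diagonal_one, diagonal_add]
          push_cast
          rfl
  have hlogY : matLog Y = (V : Matrix m m ℂ) * diagonal (fun j => ((Real.log (y j) : ℝ) : ℂ)) *
      star (V : Matrix m m ℂ) := by
    conv_lhs => rw [spectral' hYh]
    exact matLog_unitary_conj V y
  have hlogY1 : matLog (Y + 1) =
      (V : Matrix m m ℂ) * diagonal (fun j => ((Real.log (y j + 1) : ℝ) : ℂ)) *
        star (V : Matrix m m ℂ) := by
    rw [hY1]
    exact matLog_unitary_conj V (fun j => y j + 1)
  have hT1 : (trace ((X + 1) * matLog (Y + 1))).re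
      = ∑ i, ∑ j, (x i + 1) * Real.log (y j + 1) * Complex.normSq (W i j) := by
    rw [hX1, hlogY1]
    exact trace_conj_mul_re U V _ _
  have hT2 : (trace (X * matLog Y)).re
      = ∑ i, ∑ j, x i * Real.log (y j) * Complex.normSq (W i j) := by
    conv_lhs => rw [spectral' hXh, hlogY]
    exact trace_conj_mul_re U V _ _
  have hS : SBE X = ∑ i, ∑ j, Complex.normSq (W i j) * gBE (x i) := by
    simp only [SBE, dif_pos hXh]
    refine Finset.sum_congr rfl fun i _ => ?_
    rw [← Finset.sum_mul, row_sum_normSq U V i, one_mul]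
  rw [DBE, Matrix.trace_sub, Complex.sub_re, hT1, hT2, hS]
  refine Eq.symm ?_
  calc (∑ i, ∑ j, Complex.normSq (W i j) * hBE (x i) (y j))
      = ∑ i, ∑ j, ((x i + 1) * Real.log (y j + 1) * Complex.normSq (W i j)
          - x i * Real.log (y j) * Complex.normSq (W i j)
          - Complex.normSq (W i j) * gBE (x i)) := by
        refine Finset.sum_congr rfl fun i _ => Finset.sum_congr rfl fun j _ => ?_
        simp only [hBE]; ring
    _ = _ := by
        simp only [Finset.sum_sub_distrib]
        ring

lemma DBE_self {X : Matrix m m ℂ} (hX : X.PosDef) : DBE X X = 0 := by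
  rw [DBE_eq_sum hX hX, UnitaryGroup.star_mul_self]
  refine Finset.sum_eq_zero fun i _ => Finset.sum_eq_zero fun j _ => ?_
  by_cases h : i = j
  · subst h; rw [hBE_self, mul_zero]
  · rw [Matrix.one_apply_ne h]
    simp

end MatrixAux

/-- **faithfulness of the Bose–Einstein relative entropy, Proposition 13.**
For `n × n` Hermitian positive definite matrices `X` and `Y`, `D_BE(X‖Y) ≥ 0`, with
equality if and only if `X = Y`. -/
theorem stmt_12 {n : ℕ} (X Y : Matrix (Fin n) (Fin n) ℂ) (hX : X.PosDef) (hY : Y.PosDef) :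
    0 ≤ DBE X Y ∧ (DBE X Y = 0 ↔ X = Y) := by
  have hkey := DBE_eq_sum hX hY
  have hxpos : ∀ i, 0 < hX.isHermitian.eigenvalues i := fun i => hX.eigenvalues_pos i
  have hypos : ∀ j, 0 < hY.isHermitian.eigenvalues j := fun j => hY.eigenvalues_pos j
  have htermnn : ∀ i ∈ Finset.univ, ∀ j ∈ (Finset.univ : Finset (Fin n)),
      0 ≤ Complex.normSq ((star (hX.isHermitian.eigenvectorUnitary : Matrix (Fin n) (Fin n) ℂ) *
        (hY.isHermitian.eigenvectorUnitary : Matrix (Fin n) (Fin n) ℂ)) i j) *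
        hBE (hX.isHermitian.eigenvalues i) (hY.isHermitian.eigenvalues j) :=
    fun i _ j _ => mul_nonneg (Complex.normSq_nonneg _) (hBE_nonneg (hxpos i) (hypos j))
  have nonneg : 0 ≤ DBE X Y := by
    rw [hkey]
    exact Finset.sum_nonneg fun i hi => Finset.sum_nonneg (htermnn i hi)
  refine ⟨nonneg, ?_, ?_⟩
  · intro h0
    rw [hkey] at h0
    have hz := (Finset.sum_eq_zero_iff_of_nonneg
      (fun i hi => Finset.sum_nonneg (htermnn i hi))).mp h0.symm.symm
    have hterm0 : ∀ i j,
        Complex.normSq ((star (hX.isHermitian.eigenvectorUnitary : Matrix (Fin n) (Fin n) ℂ) *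
          (hY.isHermitian.eigenvectorUnitary : Matrix (Fin n) (Fin n) ℂ)) i j) *
          hBE (hX.isHermitian.eigenvalues i) (hY.isHermitian.eigenvalues j) = 0 := by
      intro i j
      exact (Finset.sum_eq_zero_iff_of_nonneg (htermnn i (Finset.mem_univ i))).mp
        (hz i (Finset.mem_univ i)) j (Finset.mem_univ j)
    have hcomm : ∀ i j, ((hX.isHermitian.eigenvalues i : ℝ) : ℂ) *
        ((star (hX.isHermitian.eigenvectorUnitary : Matrix (Fin n) (Fin n) ℂ) *
          (hY.isHermitian.eigenvectorUnitary : Matrix (Fin n) (Fin n) ℂ)) i j) =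
        ((star (hX.isHermitian.eigenvectorUnitary : Matrix (Fin n) (Fin n) ℂ) *
          (hY.isHermitian.eigenvectorUnitary : Matrix (Fin n) (Fin n) ℂ)) i j) *
        ((hY.isHermitian.eigenvalues j : ℝ) : ℂ) := by
      intro i j
      by_cases hw : (star (hX.isHermitian.eigenvectorUnitary : Matrix (Fin n) (Fin n) ℂ) *
          (hY.isHermitian.eigenvectorUnitary : Matrix (Fin n) (Fin n) ℂ)) i j = 0
      · simp [hw]
      · have hp : Complex.normSq ((star (hX.isHermitian.eigenvectorUnitary :
            Matrix (Fin n) (Fin n) ℂ) *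
            (hY.isHermitian.eigenvectorUnitary : Matrix (Fin n) (Fin n) ℂ)) i j) ≠ 0 := by
          simpa [Complex.normSq_eq_zero] using hw
        have hh : hBE (hX.isHermitian.eigenvalues i) (hY.isHermitian.eigenvalues j) = 0 := by
          rcases mul_eq_zero.mp (hterm0 i j) with h | h
          · exact absurd h hp
          · exact h
        have hxy : hX.isHermitian.eigenvalues i = hY.isHermitian.eigenvalues j := by
          by_contra hne
          exact (hBE_pos (hxpos i) (hypos j) hne).ne' hh
        rw [hxy, mul_comm]
    calc X = (hX.isHermitian.eigenvectorUnitary : Matrix (Fin n) (Fin n) ℂ) *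
          diagonal (fun i => (hX.isHermitian.eigenvalues i : ℂ)) *
          star (hX.isHermitian.eigenvectorUnitary : Matrix (Fin n) (Fin n) ℂ) :=
        spectral' hX.isHermitian
      _ = (hY.isHermitian.eigenvectorUnitary : Matrix (Fin n) (Fin n) ℂ) *
          diagonal (fun j => (hY.isHermitian.eigenvalues j : ℂ)) *
          star (hY.isHermitian.eigenvectorUnitary : Matrix (Fin n) (Fin n) ℂ) :=
        (conj_eq_iff_comm _ _ _ _).mpr ((diag_comm_iff _ _ _).mpr hcomm)
      _ = Y := (spectral' hY.isHermitian).symm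
  · intro h
    rw [← h] at *
    exact DBE_self hX
end

section
/- Let X and Y be n×n Hermitian positive definite complex matrices. Suppose (ψ_1, ..., ψ_n) and (φ_1, ..., φ_n) are orthonormal bases of ℂ^n and x_1, ..., x_n, y_1, ..., y_n are positive reals such that X = Σ_i x_i·|ψ_i⟩⟨ψ_i| and Y = Σ_j y_j·|φ_j⟩⟨φ_j| (i.e., these are spectral decompositions of X and Y). Then D_BE(X‖Y) = Σ_{i,j} d_BE(x_i‖y_j)·|⟨ψ_i, φ_j⟩|², where ⟨·,·⟩ is the standard inner product on ℂ^n. -/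
open Matrix
open scoped ComplexOrder

/-- The classical scalar Bose–Einstein divergence
`d_BE(x‖y) = x·ln(x/y) + (x+1)·ln((y+1)/(x+1))`. -/
noncomputable def dBE (x y : ℝ) : ℝ :=
  x * Real.log (x / y) + (x + 1) * Real.log ((y + 1) / (x + 1))

section Aux

open Polynomial

lemma myConjPow {n : ℕ} (P A : Matrix (Fin n) (Fin n) ℂ)
    (hP : P * star P = 1) (hP' : star P * P = 1) (k : ℕ) :
    (P * A * star P) ^ k = P * A ^ k * star P := by
  induction k with
  | zero => simp [hP, ← Matrix.mul_assoc]
  | succ k ih =>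
    rw [pow_succ, ih, pow_succ]
    calc P * A ^ k * star P * (P * A * star P)
        = P * A ^ k * (star P * P) * A * star P := by noncomm_ring
      _ = P * (A ^ k * A) * star P := by rw [hP']; noncomm_ring

lemma myAevalConj {n : ℕ} (P A : Matrix (Fin n) (Fin n) ℂ)
    (hP : P * star P = 1) (hP' : star P * P = 1) (p : ℂ[X]) :
    aeval (P * A * star P) p = P * aeval A p * star P := by
  induction p using Polynomial.induction_on' with
  | add p q hp hq => rw [map_add, map_add, hp, hq]; noncomm_ring
  | monomial k c =>
    rw [aeval_monomial, aeval_monomial, myConjPow P A hP hP' k]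
    simp only [Algebra.algebraMap_eq_smul_one]
    rw [smul_mul_assoc, one_mul, smul_mul_assoc, one_mul, Matrix.mul_smul, Matrix.smul_mul]

lemma myAevalDiag {n : ℕ} (d : Fin n → ℂ) (p : ℂ[X]) :
    aeval (Matrix.diagonal d) p = Matrix.diagonal (fun i => p.eval (d i)) := by
  induction p using Polynomial.induction_on' with
  | add p q hp hq =>
    simp [map_add, hp, hq, Matrix.diagonal_add]
  | monomial k c =>
    simp [aeval_monomial, Matrix.diagonal_pow, Algebra.algebraMap_eq_smul_one,
      eval_monomial, Matrix.smul_mul, ← Matrix.diagonal_one, Matrix.diagonal_mul_diagonal]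
    ext i j
    by_cases h : i = j <;> simp [h, Matrix.diagonal_apply]

lemma myFunCalc {n : ℕ} (P Q : Matrix (Fin n) (Fin n) ℂ)
    (hP : P * star P = 1) (hP' : star P * P = 1)
    (hQ : Q * star Q = 1) (hQ' : star Q * Q = 1)
    (a b : Fin n → ℝ)
    (hEq : P * diagonal (fun i => (a i : ℂ)) * star P
         = Q * diagonal (fun i => (b i : ℂ)) * star Q)
    (f : ℝ → ℝ) :
    P * diagonal (fun i => (f (a i) : ℂ)) * star P
      = Q * diagonal (fun i => (f (b i) : ℂ)) * star Q := by
  classical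
  set s : Finset ℂ := (Finset.univ.image fun i => (a i : ℂ)) ∪
      (Finset.univ.image fun i => (b i : ℂ)) with hs
  set p : ℂ[X] := Lagrange.interpolate s id (fun z => (f z.re : ℂ)) with hp
  have hinj : Set.InjOn (id : ℂ → ℂ) s := Function.injective_id.injOn
  have hevala : ∀ i, p.eval ((a i : ℂ)) = (f (a i) : ℂ) := by
    intro i
    have hmem : (a i : ℂ) ∈ s := by
      simp [hs]
    have h := Lagrange.eval_interpolate_at_node (fun z => (f z.re : ℂ)) hinj hmem
    simp only [id, Complex.ofReal_re] at h
    rw [hp]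
    exact h
  have hevalb : ∀ i, p.eval ((b i : ℂ)) = (f (b i) : ℂ) := by
    intro i
    have hmem : (b i : ℂ) ∈ s := by
      simp [hs]
    have h := Lagrange.eval_interpolate_at_node (fun z => (f z.re : ℂ)) hinj hmem
    simp only [id, Complex.ofReal_re] at h
    rw [hp]
    exact h
  have h1 : aeval (P * diagonal (fun i => (a i : ℂ)) * star P) p
      = P * diagonal (fun i => (f (a i) : ℂ)) * star P := by
    rw [myAevalConj P _ hP hP', myAevalDiag, funext hevala]
  have h2 : aeval (Q * diagonal (fun i => (b i : ℂ)) * star Q) p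
      = Q * diagonal (fun i => (f (b i) : ℂ)) * star Q := by
    rw [myAevalConj Q _ hQ hQ', myAevalDiag, funext hevalb]
  rw [← h1, ← h2, hEq]

/-- column matrix of a family of vectors -/
def colM {n : ℕ} (ψ : Fin n → Fin n → ℂ) : Matrix (Fin n) (Fin n) ℂ :=
  Matrix.of fun k i => ψ i k

lemma colM_star_mul {n : ℕ} (ψ φ : Fin n → Fin n → ℂ) (i j : Fin n) :
    (star (colM ψ) * colM φ) i j = star (ψ i) ⬝ᵥ φ j := by
  simp [colM, Matrix.mul_apply, Matrix.star_apply, dotProduct, mul_comm]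

lemma colM_dec {n : ℕ} (ψ : Fin n → Fin n → ℂ) (c : Fin n → ℝ) :
    (∑ i, (c i : ℂ) • Matrix.vecMulVec (ψ i) (star (ψ i)))
      = colM ψ * Matrix.diagonal (fun i => (c i : ℂ)) * star (colM ψ) := by
  ext k l
  simp [colM, Matrix.mul_apply, Matrix.sum_apply, Matrix.vecMulVec_apply,
    Matrix.star_apply, Matrix.diagonal_apply, Finset.sum_mul, mul_comm, mul_assoc,
    mul_left_comm]

lemma myTraceDiag {n : ℕ} (C : Matrix (Fin n) (Fin n) ℂ) (d e : Fin n → ℂ) :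
    Matrix.trace (Matrix.diagonal d * C * Matrix.diagonal e * star C)
      = ∑ i, ∑ j, d i * e j * (C i j * star (C i j)) := by
  have hA : ∀ i j, (Matrix.diagonal d * C * Matrix.diagonal e) i j = d i * C i j * e j := by
    intro i j
    rw [Matrix.mul_diagonal, Matrix.diagonal_mul]
  calc Matrix.trace (Matrix.diagonal d * C * Matrix.diagonal e * star C)
      = ∑ i, ∑ j, (Matrix.diagonal d * C * Matrix.diagonal e) i j * star C j i := by
        simp [Matrix.trace, Matrix.mul_apply, Matrix.diag]
    _ = _ := by
        refine Finset.sum_congr rfl fun i _ => Finset.sum_congr rfl fun j _ => ?_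
        rw [hA, Matrix.star_apply]
        ring

lemma myTraceConj {n : ℕ} (P Q : Matrix (Fin n) (Fin n) ℂ) (d e : Fin n → ℂ) :
    Matrix.trace (P * Matrix.diagonal d * star P * (Q * Matrix.diagonal e * star Q))
      = ∑ i, ∑ j, d i * e j * ((star P * Q) i j * star ((star P * Q) i j)) := by
  have h1 : P * Matrix.diagonal d * star P * (Q * Matrix.diagonal e * star Q)
      = P * (Matrix.diagonal d * (star P * Q) * Matrix.diagonal e * (star Q)) := by
    noncomm_ring
  have h2 : star ((star P * Q)) = star Q * P := by simp
  rw [h1, Matrix.trace_mul_comm,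
    Matrix.mul_assoc (Matrix.diagonal d * (star P * Q) * Matrix.diagonal e) (star Q) P,
    ← h2, myTraceDiag]

end Aux


/-- **spectral expansion, Proposition 15.** If `X = ∑ i, x i·|ψ i⟩⟨ψ i|` and
`Y = ∑ j, y j·|φ j⟩⟨φ j|` are spectral decompositions of Hermitian positive definite
matrices with respect to orthonormal bases `ψ, φ` of `ℂ^n` and positive eigenvalues
`x, y`, then `D_BE(X‖Y) = ∑ i j, d_BE(x i‖y j)·|⟨ψ i, φ j⟩|²`. -/
theorem stmt_14 {n : ℕ} (X Y : Matrix (Fin n) (Fin n) ℂ) (hX : X.PosDef) (hY : Y.PosDef)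
    (ψ φ : Fin n → (Fin n → ℂ)) (x y : Fin n → ℝ)
    (hx : ∀ i, 0 < x i) (hy : ∀ j, 0 < y j)
    (hψ : ∀ i j, star (ψ i) ⬝ᵥ ψ j = if i = j then 1 else 0)
    (hφ : ∀ i j, star (φ i) ⬝ᵥ φ j = if i = j then 1 else 0)
    (hXdec : X = ∑ i, (x i : ℂ) • Matrix.vecMulVec (ψ i) (star (ψ i)))
    (hYdec : Y = ∑ j, (y j : ℂ) • Matrix.vecMulVec (φ j) (star (φ j))) :
    DBE X Y = ∑ i, ∑ j, dBE (x i) (y j) * Complex.normSq (star (ψ i) ⬝ᵥ φ j) := by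
  classical
  set P := colM ψ with hPdef
  set Q := colM φ with hQdef
  -- unitarity of P and Q
  have hP' : star P * P = 1 := by
    ext i j
    rw [colM_star_mul, hψ i j, Matrix.one_apply]
  have hP : P * star P = 1 := mul_eq_one_comm.mp hP'
  have hQ' : star Q * Q = 1 := by
    ext i j
    rw [colM_star_mul, hφ i j, Matrix.one_apply]
  have hQ : Q * star Q = 1 := mul_eq_one_comm.mp hQ'
  -- decompositions
  have hXP : X = P * Matrix.diagonal (fun i => (x i : ℂ)) * star P := by
    rw [hXdec, hPdef, colM_dec]
  have hYQ : Y = Q * Matrix.diagonal (fun j => (y j : ℂ)) * star Q := by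
    rw [hYdec, hQdef, colM_dec]
  have hX1P : X + 1 = P * Matrix.diagonal (fun i => ((x i + 1 : ℝ) : ℂ)) * star P := by
    have : Matrix.diagonal (fun i => ((x i + 1 : ℝ) : ℂ))
        = Matrix.diagonal (fun i => (x i : ℂ)) + 1 := by
      ext i j
      by_cases h : i = j
      · subst h
        simp [Matrix.diagonal_apply_eq, Matrix.one_apply_eq]
      · simp [Matrix.diagonal_apply_ne _ h, Matrix.one_apply_ne h]
    rw [this, Matrix.mul_add, Matrix.add_mul, ← hXP, Matrix.mul_one, hP]
  have hY1Q : Y + 1 = Q * Matrix.diagonal (fun j => ((y j + 1 : ℝ) : ℂ)) * star Q := by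
    have : Matrix.diagonal (fun j => ((y j + 1 : ℝ) : ℂ))
        = Matrix.diagonal (fun j => (y j : ℂ)) + 1 := by
      ext i j
      by_cases h : i = j
      · subst h
        simp [Matrix.diagonal_apply_eq, Matrix.one_apply_eq]
      · simp [Matrix.diagonal_apply_ne _ h, Matrix.one_apply_ne h]
    rw [this, Matrix.mul_add, Matrix.add_mul, ← hYQ, Matrix.mul_one, hQ]
  have hXH : X.IsHermitian := hX.1
  have hYH : Y.IsHermitian := hY.1
  have hY1H : (Y + 1).IsHermitian := hYH.add Matrix.isHermitian_one
  -- unitarity of the eigenvector unitaries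
  have hUY : ((hYH.eigenvectorUnitary : Matrix (Fin n) (Fin n) ℂ))
      * star (hYH.eigenvectorUnitary : Matrix (Fin n) (Fin n) ℂ) = 1 :=
    Matrix.mem_unitaryGroup_iff.mp hYH.eigenvectorUnitary.2
  have hUY' : star ((hYH.eigenvectorUnitary : Matrix (Fin n) (Fin n) ℂ))
      * (hYH.eigenvectorUnitary : Matrix (Fin n) (Fin n) ℂ) = 1 :=
    Matrix.mem_unitaryGroup_iff'.mp hYH.eigenvectorUnitary.2
  have hUY1 : ((hY1H.eigenvectorUnitary : Matrix (Fin n) (Fin n) ℂ))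
      * star (hY1H.eigenvectorUnitary : Matrix (Fin n) (Fin n) ℂ) = 1 :=
    Matrix.mem_unitaryGroup_iff.mp hY1H.eigenvectorUnitary.2
  have hUY1' : star ((hY1H.eigenvectorUnitary : Matrix (Fin n) (Fin n) ℂ))
      * (hY1H.eigenvectorUnitary : Matrix (Fin n) (Fin n) ℂ) = 1 :=
    Matrix.mem_unitaryGroup_iff'.mp hY1H.eigenvectorUnitary.2
  have hUX : ((hXH.eigenvectorUnitary : Matrix (Fin n) (Fin n) ℂ))
      * star (hXH.eigenvectorUnitary : Matrix (Fin n) (Fin n) ℂ) = 1 :=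
    Matrix.mem_unitaryGroup_iff.mp hXH.eigenvectorUnitary.2
  have hUX' : star ((hXH.eigenvectorUnitary : Matrix (Fin n) (Fin n) ℂ))
      * (hXH.eigenvectorUnitary : Matrix (Fin n) (Fin n) ℂ) = 1 :=
    Matrix.mem_unitaryGroup_iff'.mp hXH.eigenvectorUnitary.2
  -- matLog Y in terms of φ
  have hlogY : matLog Y = Q * Matrix.diagonal (fun j => ((Real.log (y j) : ℂ))) * star Q := by
    rw [matLog, dif_pos hYH]
    exact (myFunCalc Q _ hQ hQ' hUY hUY' y hYH.eigenvalues
      (by rw [← hYQ]; exact hYH.spectral_theorem) Real.log).symm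
  have hlogY1 : matLog (Y + 1)
      = Q * Matrix.diagonal (fun j => ((Real.log (y j + 1) : ℂ))) * star Q := by
    rw [matLog, dif_pos hY1H]
    exact (myFunCalc Q _ hQ hQ' hUY1 hUY1' (fun j => y j + 1) hY1H.eigenvalues
      (by rw [← hY1Q]; exact hY1H.spectral_theorem) Real.log).symm
  -- SBE X in terms of x
  have hSBE : SBE X = ∑ i, gBE (x i) := by
    rw [SBE, dif_pos hXH]
    have hfc := myFunCalc P _ hP hP' hUX hUX' x hXH.eigenvalues
      (by rw [← hXP]; exact hXH.spectral_theorem) gBE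
    have htr := congrArg Matrix.trace hfc
    have t1 : Matrix.trace (P * Matrix.diagonal (fun i => ((gBE (x i) : ℂ))) * star P)
        = ∑ i, ((gBE (x i) : ℂ)) := by
      rw [Matrix.trace_mul_cycle, hP', Matrix.one_mul, Matrix.trace_diagonal]
    have t2 : Matrix.trace ((hXH.eigenvectorUnitary : Matrix (Fin n) (Fin n) ℂ) *
        Matrix.diagonal (fun i => ((gBE (hXH.eigenvalues i) : ℂ))) *
        star (hXH.eigenvectorUnitary : Matrix (Fin n) (Fin n) ℂ))
        = ∑ i, ((gBE (hXH.eigenvalues i) : ℂ)) := by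
      rw [Matrix.trace_mul_cycle, hUX', Matrix.one_mul, Matrix.trace_diagonal]
    rw [t1, t2] at htr
    exact_mod_cast htr.symm
  -- the overlap matrix
  set C := star P * Q with hCdef
  have hCij : ∀ i j, C i j = star (ψ i) ⬝ᵥ φ j := fun i j => colM_star_mul ψ φ i j
  have hCrow : ∀ i, ∑ j, Complex.normSq (C i j) = 1 := by
    intro i
    have h1 : C * star C = 1 := by
      have hstar : star C = star Q * P := by simp [hCdef]
      rw [hstar, hCdef, Matrix.mul_assoc, ← Matrix.mul_assoc Q, hQ, Matrix.one_mul, hP']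
    have h2 : (C * star C) i i = 1 := by rw [h1, Matrix.one_apply_eq]
    rw [Matrix.mul_apply] at h2
    have h3 : ∑ j, ((Complex.normSq (C i j) : ℂ)) = 1 := by
      rw [← h2]
      refine Finset.sum_congr rfl fun j _ => ?_
      rw [Matrix.star_apply, RCLike.star_def, Complex.mul_conj]
    exact_mod_cast h3
  -- trace computations
  have hT2 : (Matrix.trace (X * matLog Y)).re
      = ∑ i, ∑ j, x i * Real.log (y j) * Complex.normSq (C i j) := by
    rw [hXP, hlogY, myTraceConj, ← hCdef]
    rw [Complex.re_sum]
    refine Finset.sum_congr rfl fun i _ => ?_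
    rw [Complex.re_sum]
    refine Finset.sum_congr rfl fun j _ => ?_
    rw [RCLike.star_def, Complex.mul_conj, ← Complex.ofReal_mul, ← Complex.ofReal_mul,
      Complex.ofReal_re]
  have hT1 : (Matrix.trace ((X + 1) * matLog (Y + 1))).re
      = ∑ i, ∑ j, (x i + 1) * Real.log (y j + 1) * Complex.normSq (C i j) := by
    rw [hX1P, hlogY1, myTraceConj, ← hCdef]
    rw [Complex.re_sum]
    refine Finset.sum_congr rfl fun i _ => ?_
    rw [Complex.re_sum]
    refine Finset.sum_congr rfl fun j _ => ?_
    rw [RCLike.star_def, Complex.mul_conj, ← Complex.ofReal_mul, ← Complex.ofReal_mul,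
      Complex.ofReal_re]
  -- assemble
  rw [DBE, Matrix.trace_sub, Complex.sub_re, hT1, hT2, hSBE]
  have key : ∀ i j, dBE (x i) (y j) * Complex.normSq (C i j)
      = ((x i + 1) * Real.log (y j + 1) - x i * Real.log (y j)) * Complex.normSq (C i j)
        - gBE (x i) * Complex.normSq (C i j) := by
    intro i j
    have hxi := (hx i).ne'
    have hyj := (hy j).ne'
    have hxi1 : x i + 1 ≠ 0 := by nlinarith [hx i]
    have hyj1 : y j + 1 ≠ 0 := by nlinarith [hy j]
    rw [dBE, gBE, Real.log_div hxi hyj, Real.log_div hyj1 hxi1]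
    ring
  have : ∑ i, ∑ j, dBE (x i) (y j) * Complex.normSq (star (ψ i) ⬝ᵥ φ j)
      = ∑ i, ∑ j, ((x i + 1) * Real.log (y j + 1) - x i * Real.log (y j))
          * Complex.normSq (C i j) - ∑ i, gBE (x i) := by
    rw [← Finset.sum_sub_distrib]
    refine Finset.sum_congr rfl fun i _ => ?_
    calc ∑ j, dBE (x i) (y j) * Complex.normSq (star (ψ i) ⬝ᵥ φ j)
        = ∑ j, (((x i + 1) * Real.log (y j + 1) - x i * Real.log (y j))
            * Complex.normSq (C i j) - gBE (x i) * Complex.normSq (C i j)) := by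
          refine Finset.sum_congr rfl fun j _ => ?_
          rw [← hCij, key]
      _ = (∑ j, ((x i + 1) * Real.log (y j + 1) - x i * Real.log (y j))
            * Complex.normSq (C i j)) - gBE (x i) * ∑ j, Complex.normSq (C i j) := by
          rw [Finset.sum_sub_distrib, Finset.mul_sum]
      _ = _ := by rw [hCrow i, mul_one]
  rw [this]
  have hsplit : ∑ i, ∑ j, ((x i + 1) * Real.log (y j + 1) - x i * Real.log (y j))
        * Complex.normSq (C i j)
      = (∑ i, ∑ j, (x i + 1) * Real.log (y j + 1) * Complex.normSq (C i j))
        - ∑ i, ∑ j, x i * Real.log (y j) * Complex.normSq (C i j) := by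
    rw [← Finset.sum_sub_distrib]
    refine Finset.sum_congr rfl fun i _ => ?_
    rw [← Finset.sum_sub_distrib]
    exact Finset.sum_congr rfl fun j _ => by ring
  rw [hsplit]
  ring
end

section
/- The scalar Bose–Einstein divergence is not jointly convex: there exist positive reals x_1, y_1, x_2, y_2 such that d_BE((x_1+x_2)/2‖(y_1+y_2)/2) > (1/2)·d_BE(x_1‖y_1) + (1/2)·d_BE(x_2‖y_2). Equivalently, the function (x, y) ↦ d_BE(x‖y) is not convex on the set (0,∞) × (0,∞). -/
/-- **failure of joint convexity, part of Proposition 16.** The scalar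
Bose–Einstein divergence is not jointly convex: there exist positive reals
`x₁, y₁, x₂, y₂` with
`d_BE((x₁+x₂)/2 ‖ (y₁+y₂)/2) > ½·d_BE(x₁‖y₁) + ½·d_BE(x₂‖y₂)`. -/
theorem stmt_16 : ∃ x₁ y₁ x₂ y₂ : ℝ, 0 < x₁ ∧ 0 < y₁ ∧ 0 < x₂ ∧ 0 < y₂ ∧
    (1 / 2) * dBE x₁ y₁ + (1 / 2) * dBE x₂ y₂ < dBE ((x₁ + x₂) / 2) ((y₁ + y₂) / 2) := by
  refine ⟨1, 4, 1, 16, by norm_num, by norm_num, by norm_num, by norm_num, ?_⟩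
  unfold dBE
  norm_num
  have key : Real.log 180625 < Real.log 234256 :=
    Real.log_lt_log (by norm_num) (by norm_num)
  have h1 : (180625 : ℝ) = 5 ^ 4 * 17 ^ 2 := by norm_num
  have h2 : (234256 : ℝ) = 11 ^ 4 * 2 ^ 4 := by norm_num
  rw [h1, h2, Real.log_mul (by positivity) (by positivity),
    Real.log_mul (by positivity) (by positivity), Real.log_pow, Real.log_pow,
    Real.log_pow, Real.log_pow] at key
  have e4 : Real.log (1/4 : ℝ) = -(2 * Real.log 2) := by
    rw [show (1/4 : ℝ) = (2:ℝ)⁻¹ ^ 2 by norm_num, Real.log_pow, Real.log_inv]; ring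
  have e16 : Real.log (1/16 : ℝ) = -(4 * Real.log 2) := by
    rw [show (1/16 : ℝ) = (2:ℝ)⁻¹ ^ 4 by norm_num, Real.log_pow, Real.log_inv]; ring
  have e52 : Real.log (5/2 : ℝ) = Real.log 5 - Real.log 2 :=
    Real.log_div (by norm_num) (by norm_num)
  have e172 : Real.log (17/2 : ℝ) = Real.log 17 - Real.log 2 :=
    Real.log_div (by norm_num) (by norm_num)
  have e112 : Real.log (11/2 : ℝ) = Real.log 11 - Real.log 2 :=
    Real.log_div (by norm_num) (by norm_num)
  have e10 : Real.log (1/10 : ℝ) = -(Real.log 2 + Real.log 5) := by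
    rw [show (1/10 : ℝ) = ((2:ℝ)*5)⁻¹ by norm_num, Real.log_inv,
      Real.log_mul (by norm_num) (by norm_num)]
  rw [e4,e16,e52,e172,e112,e10]; push_cast at key; linarith
end

section
/- For all positive reals x and y, the scalar Bose–Einstein divergence admits the Bregman integral representation d_BE(x‖y) = (x − y)² · ∫_0^1 (1 − t)/(z_t·(z_t + 1)) dt, where z_t := y + t·(x − y) (note z_t > 0 for all t ∈ [0,1]). -/
/-- **Bregman integral representation, Lemma 18.** For all positive reals
`x, y`, `d_BE(x‖y) = (x − y)²·∫_0^1 (1 − t)/(z_t·(z_t + 1)) dt`, where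
`z_t = y + t·(x − y)`. -/
theorem stmt_18 (x y : ℝ) (hx : 0 < x) (hy : 0 < y) :
    dBE x y = (x - y) ^ 2 *
      ∫ t in (0:ℝ)..1, (1 - t) / ((y + t * (x - y)) * (y + t * (x - y) + 1)) := by
  have hz : ∀ t ∈ Set.uIcc (0:ℝ) 1, 0 < y + t * (x - y) := by
    intro t ht
    rw [Set.uIcc_of_le (by norm_num)] at ht
    obtain ⟨ht0, ht1⟩ := ht
    nlinarith [mul_nonneg ht0 hx.le, mul_nonneg (sub_nonneg.2 ht1) hy.le]
  set F : ℝ → ℝ := fun t =>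
    x * Real.log (y + t * (x - y)) - (x + 1) * Real.log (y + t * (x - y) + 1) with hF
  set g : ℝ → ℝ := fun t =>
    (x - y) ^ 2 * ((1 - t) / ((y + t * (x - y)) * (y + t * (x - y) + 1))) with hg
  have hderiv : ∀ t ∈ Set.uIcc (0:ℝ) 1, HasDerivAt F (g t) t := by
    intro t ht
    have hzt := hz t ht
    have hzt1 : (0:ℝ) < y + t * (x - y) + 1 := by linarith
    have h1 : HasDerivAt (fun t : ℝ => y + t * (x - y)) (x - y) t := by
      simpa using ((hasDerivAt_id t).mul_const (x - y)).const_add y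
    have h2 : HasDerivAt (fun t : ℝ => Real.log (y + t * (x - y)))
        ((x - y) / (y + t * (x - y))) t := by
      simpa [Function.comp_def, div_eq_mul_inv, mul_comm] using (Real.hasDerivAt_log hzt.ne').comp t h1
    have h3 : HasDerivAt (fun t : ℝ => Real.log (y + t * (x - y) + 1))
        ((x - y) / (y + t * (x - y) + 1)) t := by
      simpa [Function.comp_def, div_eq_mul_inv, mul_comm] using (Real.hasDerivAt_log hzt1.ne').comp t (h1.add_const 1)
    have h4 := (h2.const_mul x).sub (h3.const_mul (x + 1))
    convert h4 using 1
    · rfl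
    · rfl
    · rfl
    simp only [hg]
    rw [show (x - y) ^ 2 * ((1 - t) / ((y + t * (x - y)) * (y + t * (x - y) + 1))) = (x - y) * (x - (y + t * (x - y))) / ((y + t * (x - y)) * (y + t * (x - y) + 1)) by ring]
    generalize y + t * (x - y) = z at hzt hzt1 ⊢
    field_simp
    ring
  have hcont : IntervalIntegrable g MeasureTheory.volume 0 1 := by
    apply ContinuousOn.intervalIntegrable
    apply ContinuousOn.mul continuousOn_const
    apply ContinuousOn.div
    · fun_prop
    · fun_prop
    · intro t ht
      have h1 := hz t ht
      positivity
  have key := intervalIntegral.integral_eq_sub_of_hasDerivAt hderiv hcont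
  have hsplit : ∫ t in (0:ℝ)..1, g t = (x - y) ^ 2 *
      ∫ t in (0:ℝ)..1, (1 - t) / ((y + t * (x - y)) * (y + t * (x - y) + 1)) := by
    simp [hg, intervalIntegral.integral_const_mul]
  rw [← hsplit, key, hF]
  simp only [dBE]
  rw [Real.log_div hx.ne' hy.ne', Real.log_div (by linarith) (by linarith : (x:ℝ) + 1 ≠ 0)]
  ring
end

section
/- Let a, b ≥ 0 be reals satisfying 2b + 1 ≥ a and a + b > 0, and let X and Y be n×n Hermitian positive definite complex matrices. Then D_BE(X‖Y) ≥ D_BE(a·X + b·I‖a·Y + b·I), where I is the n×n identity matrix (note that a·X + b·I and a·Y + b·I are Hermitian positive definite under these hypotheses). -/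
open Matrix
open scoped ComplexOrder

/-! ### Auxiliary scalar lemmas -/

/-- The scalar Bose–Einstein relative entropy kernel. -/
noncomputable def dBEfun (x y : ℝ) : ℝ :=
  x * Real.log x - (x + 1) * Real.log (x + 1) + ((x + 1) * Real.log (y + 1) - x * Real.log y)

lemma affpos {a b t : ℝ} (ha : 0 ≤ a) (hb : 0 ≤ b) (hpos : 0 < a + b) (ht : 0 < t) :
    0 < a * t + b := by
  rcases eq_or_lt_of_le ha with h | h
  · have hb' : 0 < b := by nlinarith
    nlinarith
  · nlinarith

lemma hasDeriv_aux (a b x : ℝ) (ha : 0 ≤ a) (hb : 0 ≤ b) (hpos : 0 < a + b) (hx : 0 < x)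
    {y : ℝ} (hy : 0 < y) :
    HasDerivAt (fun t => dBEfun x t - dBEfun (a * x + b) (a * t + b))
      ((y - x) * (1 / (y * (y + 1)) - a ^ 2 / ((a * y + b) * (a * y + b + 1)))) y := by
  have hv : 0 < a * y + b := affpos ha hb hpos hy
  have h1 : HasDerivAt (fun t : ℝ => Real.log t) y⁻¹ y := Real.hasDerivAt_log hy.ne'
  have h2 : HasDerivAt (fun t : ℝ => Real.log (t + 1)) (1 / (y + 1)) y := by
    simpa using ((hasDerivAt_id y).add_const 1).log (by positivity)
  have h3 : HasDerivAt (fun t : ℝ => Real.log (a * t + b)) (a / (a * y + b)) y := by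
    simpa using (((hasDerivAt_id y).const_mul a).add_const b).log hv.ne'
  have h4 : HasDerivAt (fun t : ℝ => Real.log (a * t + b + 1)) (a / (a * y + b + 1)) y := by
    simpa using ((((hasDerivAt_id y).const_mul a).add_const b).add_const 1).log (by positivity)
  have H : HasDerivAt (fun t => dBEfun x t - dBEfun (a * x + b) (a * t + b))
      (((x + 1) * (1 / (y + 1)) - x * y⁻¹) -
        ((a * x + b + 1) * (a / (a * y + b + 1)) - (a * x + b) * (a / (a * y + b)))) y := by
    unfold dBEfun
    exact (((h2.const_mul (x + 1)).sub (h1.const_mul x)).const_add _).sub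
      (((h4.const_mul (a * x + b + 1)).sub (h3.const_mul (a * x + b))).const_add _)
  convert H using 1
  have hv1 : a * y + b + 1 ≠ 0 := by linarith [hv]
  have hv2 : y * a + b ≠ 0 := by linarith [hv]
  field_simp [hv.ne', hv1, hy.ne', hv2]
  ring

lemma bracket_nonneg {a b y : ℝ} (ha : 0 ≤ a) (hb : 0 ≤ b) (hcond : a ≤ 2 * b + 1)
    (hpos : 0 < a + b) (hy : 0 < y) :
    0 ≤ 1 / (y * (y + 1)) - a ^ 2 / ((a * y + b) * (a * y + b + 1)) := by
  have hv : 0 < a * y + b := affpos ha hb hpos hy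
  rw [sub_nonneg, div_le_div_iff₀ (by positivity) (by positivity)]
  nlinarith [mul_nonneg (mul_nonneg ha hy.le) (sub_nonneg.2 hcond),
    mul_nonneg hb (by linarith : (0:ℝ) ≤ b + 1)]

lemma dBE_scalar_mono {a b x y : ℝ} (ha : 0 ≤ a) (hb : 0 ≤ b) (hcond : a ≤ 2 * b + 1)
    (hpos : 0 < a + b) (hx : 0 < x) (hy : 0 < y) :
    dBEfun (a * x + b) (a * y + b) ≤ dBEfun x y := by
  set F : ℝ → ℝ := fun t => dBEfun x t - dBEfun (a * x + b) (a * t + b) with hF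
  have hFx : F x = 0 := by simp only [hF]; unfold dBEfun; ring
  have key : 0 ≤ F y := by
    rcases le_total x y with hxy | hxy
    · have hmono : MonotoneOn F (Set.Icc x y) := by
        apply monotoneOn_of_deriv_nonneg (convex_Icc x y)
        · intro t ht
          exact (hasDeriv_aux a b x ha hb hpos hx
            (lt_of_lt_of_le hx ht.1)).continuousAt.continuousWithinAt
        · intro t ht
          rw [interior_Icc] at ht
          exact (hasDeriv_aux a b x ha hb hpos hx
            (hx.trans ht.1)).differentiableAt.differentiableWithinAt
        · intro t ht
          rw [interior_Icc] at ht
          have ht0 : 0 < t := hx.trans ht.1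
          rw [(hasDeriv_aux a b x ha hb hpos hx ht0).deriv]
          exact mul_nonneg (by linarith [ht.1]) (bracket_nonneg ha hb hcond hpos ht0)
      have := hmono (Set.left_mem_Icc.2 hxy) (Set.right_mem_Icc.2 hxy) hxy
      linarith [hFx ▸ this]
    · have hanti : AntitoneOn F (Set.Icc y x) := by
        apply antitoneOn_of_deriv_nonpos (convex_Icc y x)
        · intro t ht
          exact (hasDeriv_aux a b x ha hb hpos hx
            (lt_of_lt_of_le hy ht.1)).continuousAt.continuousWithinAt
        · intro t ht
          rw [interior_Icc] at ht
          exact (hasDeriv_aux a b x ha hb hpos hx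
            (hy.trans ht.1)).differentiableAt.differentiableWithinAt
        · intro t ht
          rw [interior_Icc] at ht
          have ht0 : 0 < t := hy.trans ht.1
          rw [(hasDeriv_aux a b x ha hb hpos hx ht0).deriv]
          exact mul_nonpos_of_nonpos_of_nonneg (by linarith [ht.2])
            (bracket_nonneg ha hb hcond hpos ht0)
      have := hanti (Set.left_mem_Icc.2 hxy) (Set.right_mem_Icc.2 hxy) hxy
      linarith [hFx ▸ this]
  have : dBEfun x y - dBEfun (a * x + b) (a * y + b) = F y := rfl
  linarith [key, this]

/-! ### Auxiliary matrix lemmas -/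

lemma contOn_finite {s : Set ℝ} (hs : s.Finite) (f : ℝ → ℝ) : ContinuousOn f s := by
  rw [continuousOn_iff_continuous_restrict]
  have := hs.to_subtype
  exact continuous_of_discreteTopology

lemma contOn_spec {n : ℕ} (A : Matrix (Fin n) (Fin n) ℂ) (f : ℝ → ℝ) :
    ContinuousOn f (spectrum ℝ A) := contOn_finite (Matrix.finite_real_spectrum (A := A)) f

lemma contOn_img {n : ℕ} (A : Matrix (Fin n) (Fin n) ℂ) (f g : ℝ → ℝ) :
    ContinuousOn g (f '' spectrum ℝ A) :=
  contOn_finite ((Matrix.finite_real_spectrum (A := A)).image f) g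

lemma cfc_affine {n : ℕ} (c d : ℝ) {A : Matrix (Fin n) (Fin n) ℂ} (hA : A.IsHermitian) :
    cfc (fun t : ℝ => c * t + d) A = c • A + d • (1 : Matrix (Fin n) (Fin n) ℂ) := by
  rw [cfc_add_const d (fun t => c * t) A (contOn_spec A _) hA.isSelfAdjoint,
    Algebra.algebraMap_eq_smul_one]
  congr 1
  exact cfc_const_mul_id c A hA.isSelfAdjoint

lemma matLog_eq {n : ℕ} {A : Matrix (Fin n) (Fin n) ℂ} (hA : A.IsHermitian) :
    matLog A = cfc Real.log A := by
  rw [matLog, dif_pos hA, hA.cfc_eq Real.log]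
  rfl

lemma herm_aff {n : ℕ} (c d : ℝ) {A : Matrix (Fin n) (Fin n) ℂ} (hA : A.IsHermitian) :
    (c • A + d • (1 : Matrix (Fin n) (Fin n) ℂ)).IsHermitian := by
  show _ = _
  rw [Matrix.conjTranspose_add, Matrix.conjTranspose_smul, Matrix.conjTranspose_smul,
    Matrix.conjTranspose_one, star_trivial, star_trivial, hA.eq]

lemma matLog_comp {n : ℕ} (c d : ℝ) {A : Matrix (Fin n) (Fin n) ℂ} (hA : A.IsHermitian) :
    matLog (c • A + d • (1 : Matrix (Fin n) (Fin n) ℂ))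
      = cfc (fun t : ℝ => Real.log (c * t + d)) A := by
  rw [matLog_eq (herm_aff c d hA), ← cfc_affine c d hA,
    ← cfc_comp' Real.log (fun t : ℝ => c * t + d) A (contOn_img A _ _) (contOn_spec A _)
      hA.isSelfAdjoint]

lemma add_one_eq {n : ℕ} (A : Matrix (Fin n) (Fin n) ℂ) (c d : ℝ) :
    c • A + d • (1 : Matrix (Fin n) (Fin n) ℂ) + 1
      = c • A + (d + 1) • (1 : Matrix (Fin n) (Fin n) ℂ) := by
  rw [add_smul, one_smul, ← add_assoc]

lemma trace_cfc_single {n : ℕ} {A : Matrix (Fin n) (Fin n) ℂ} (hA : A.IsHermitian) (f : ℝ → ℝ) :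
    (Matrix.trace (cfc f A)).re = ∑ j, f (hA.eigenvalues j) := by
  rw [hA.cfc_eq f, Matrix.IsHermitian.cfc, Unitary.conjStarAlgAut_apply, Matrix.trace_mul_cycle,
    Unitary.star_mul_self_of_mem (hA.eigenvectorUnitary).2, one_mul, Matrix.trace_diagonal]
  simp

lemma re_term (c₁ c₂ : ℝ) (z : ℂ) :
    ((c₁ : ℂ) * z * (c₂ : ℂ) * star z).re = c₁ * c₂ * Complex.normSq z := by
  have : (c₁ : ℂ) * z * (c₂ : ℂ) * star z = ((c₁ * c₂ : ℝ) : ℂ) * (z * star z) := by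
    push_cast; ring
  rw [this, Complex.star_def, Complex.mul_conj]
  push_cast
  simp

lemma trace_conj_conj {n : ℕ} (W V : Matrix (Fin n) (Fin n) ℂ)
    (hW : W ∈ Matrix.unitaryGroup (Fin n) ℂ) (hV : V ∈ Matrix.unitaryGroup (Fin n) ℂ)
    (α β : Fin n → ℝ) :
    (Matrix.trace ((W * Matrix.diagonal (fun j => (α j : ℂ)) * star W) *
        (V * Matrix.diagonal (fun k => (β k : ℂ)) * star V))).re
      = ∑ j, ∑ k, Complex.normSq ((star W * V) j k) * (α j * β k) := by
  have hW1 : W * star W = 1 := (Matrix.mem_unitaryGroup_iff).mp hW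
  have hW2 : star W * W = 1 := (Matrix.mem_unitaryGroup_iff').mp hW
  set N : Matrix (Fin n) (Fin n) ℂ := star W * V with hN
  set A : Matrix (Fin n) (Fin n) ℂ := Matrix.diagonal (fun j => (α j : ℂ)) with hA
  set B : Matrix (Fin n) (Fin n) ℂ := Matrix.diagonal (fun k => (β k : ℂ)) with hB
  have hsN : star N = star V * W := by rw [hN, Matrix.star_mul, star_star]
  have key : (W * A * star W) * (V * B * star V) = W * (A * N * B * star N) * star W := by
    have h2 : W * (A * N * B * star N) * star W
        = (W * A * star W * (V * B * star V)) * (W * star W) := by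
      rw [hsN, hN]
      simp only [Matrix.mul_assoc]
    rw [h2, hW1, Matrix.mul_one]
  rw [key, Matrix.trace_mul_cycle, hW2, Matrix.one_mul]
  have h1 : ∀ j k, (A * N * B) j k = (α j : ℂ) * N j k * (β k : ℂ) := by
    intro j k
    rw [hB, Matrix.mul_diagonal, hA, Matrix.diagonal_mul]
  have expand : Matrix.trace (A * N * B * star N)
      = ∑ j, ∑ k, ((α j : ℂ) * N j k * (β k : ℂ) * star (N j k)) := by
    rw [Matrix.trace]
    refine Finset.sum_congr rfl fun j _ => ?_
    rw [Matrix.diag_apply, Matrix.mul_apply]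
    refine Finset.sum_congr rfl fun k _ => ?_
    rw [h1, Matrix.star_apply]
  rw [expand, Complex.re_sum]
  refine Finset.sum_congr rfl fun j _ => ?_
  rw [Complex.re_sum]
  refine Finset.sum_congr rfl fun k _ => ?_
  rw [re_term]
  ring

lemma rowsum {n : ℕ} {W V : Matrix (Fin n) (Fin n) ℂ}
    (hW : W ∈ Matrix.unitaryGroup (Fin n) ℂ) (hV : V ∈ Matrix.unitaryGroup (Fin n) ℂ)
    (j : Fin n) :
    ∑ k, Complex.normSq ((star W * V) j k) = 1 := by
  have hmem : star W * V ∈ Matrix.unitaryGroup (Fin n) ℂ := mul_mem (Unitary.star_mem hW) hV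
  have h1 : (star W * V) * star (star W * V) = 1 := (Matrix.mem_unitaryGroup_iff).mp hmem
  have h2 := congrFun (congrFun h1 j) j
  rw [Matrix.mul_apply, Matrix.one_apply_eq] at h2
  have h3 := congrArg Complex.re h2
  rw [Complex.re_sum] at h3
  rw [Complex.one_re] at h3
  rw [← h3]
  refine Finset.sum_congr rfl fun k _ => ?_
  rw [Matrix.star_apply, Complex.star_def, Complex.mul_conj, Complex.ofReal_re]

lemma trace_cfc_cfc {n : ℕ} {X Y : Matrix (Fin n) (Fin n) ℂ}
    (hX : X.IsHermitian) (hY : Y.IsHermitian) (f g : ℝ → ℝ) :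
    (Matrix.trace (cfc f X * cfc g Y)).re
      = ∑ j, ∑ k, Complex.normSq ((star (hX.eigenvectorUnitary : Matrix (Fin n) (Fin n) ℂ) *
            (hY.eigenvectorUnitary : Matrix (Fin n) (Fin n) ℂ)) j k) *
          (f (hX.eigenvalues j) * g (hY.eigenvalues k)) := by
  rw [hX.cfc_eq f, hY.cfc_eq g]
  exact trace_conj_conj _ _ (hX.eigenvectorUnitary).2 (hY.eigenvectorUnitary).2
    (f ∘ hX.eigenvalues) (g ∘ hY.eigenvalues)

/-- `DBE` of a joint affine image, as a weighted double sum of the scalar kernel. -/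
lemma DBE_affine_sum {n : ℕ} {X Y : Matrix (Fin n) (Fin n) ℂ}
    (hXh : X.IsHermitian) (hYh : Y.IsHermitian) (c d : ℝ) :
    DBE (c • X + d • (1 : Matrix (Fin n) (Fin n) ℂ))
        (c • Y + d • (1 : Matrix (Fin n) (Fin n) ℂ))
      = ∑ j, ∑ k, Complex.normSq ((star (hXh.eigenvectorUnitary : Matrix (Fin n) (Fin n) ℂ) *
            (hYh.eigenvectorUnitary : Matrix (Fin n) (Fin n) ℂ)) j k) *
          dBEfun (c * hXh.eigenvalues j + d) (c * hYh.eigenvalues k + d) := by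
  have hPX := herm_aff c d hXh
  have hPY := herm_aff c d hYh
  have hrow : ∀ j, ∑ k, Complex.normSq
      ((star (hXh.eigenvectorUnitary : Matrix (Fin n) (Fin n) ℂ) *
        (hYh.eigenvectorUnitary : Matrix (Fin n) (Fin n) ℂ)) j k) = 1 :=
    fun j => rowsum hXh.eigenvectorUnitary.2 hYh.eigenvectorUnitary.2 j
  have hSX : SBE (c • X + d • (1 : Matrix (Fin n) (Fin n) ℂ))
      = ∑ j, gBE (c * hXh.eigenvalues j + d) := by
    have e2 : cfc gBE (c • X + d • (1 : Matrix (Fin n) (Fin n) ℂ))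
        = cfc (fun t : ℝ => gBE (c * t + d)) X := by
      rw [← cfc_affine c d hXh]
      exact (cfc_comp' gBE (fun t : ℝ => c * t + d) X (contOn_img X _ _) (contOn_spec X _)
        hXh.isSelfAdjoint).symm
    have e1 := trace_cfc_single hPX gBE
    have e3 := trace_cfc_single hXh (fun t : ℝ => gBE (c * t + d))
    rw [SBE, dif_pos hPX, ← e1, e2, e3]
  have hT1 : (Matrix.trace ((c • X + d • (1 : Matrix (Fin n) (Fin n) ℂ) + 1) *
        matLog (c • Y + d • (1 : Matrix (Fin n) (Fin n) ℂ) + 1))).re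
      = ∑ j, ∑ k, Complex.normSq ((star (hXh.eigenvectorUnitary : Matrix (Fin n) (Fin n) ℂ) *
            (hYh.eigenvectorUnitary : Matrix (Fin n) (Fin n) ℂ)) j k) *
          ((c * hXh.eigenvalues j + (d + 1)) * Real.log (c * hYh.eigenvalues k + (d + 1))) := by
    rw [add_one_eq, add_one_eq, matLog_comp c (d + 1) hYh, ← cfc_affine c (d + 1) hXh]
    exact trace_cfc_cfc hXh hYh _ _
  have hT2 : (Matrix.trace ((c • X + d • (1 : Matrix (Fin n) (Fin n) ℂ)) *
        matLog (c • Y + d • (1 : Matrix (Fin n) (Fin n) ℂ)))).re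
      = ∑ j, ∑ k, Complex.normSq ((star (hXh.eigenvectorUnitary : Matrix (Fin n) (Fin n) ℂ) *
            (hYh.eigenvectorUnitary : Matrix (Fin n) (Fin n) ℂ)) j k) *
          ((c * hXh.eigenvalues j + d) * Real.log (c * hYh.eigenvalues k + d)) := by
    rw [matLog_comp c d hYh, ← cfc_affine c d hXh]
    exact trace_cfc_cfc hXh hYh _ _
  rw [DBE, Matrix.trace_sub, Complex.sub_re, hSX, hT1, hT2]
  have hmain : ∀ j ∈ Finset.univ,
      (∑ k, Complex.normSq ((star (hXh.eigenvectorUnitary : Matrix (Fin n) (Fin n) ℂ) *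
            (hYh.eigenvectorUnitary : Matrix (Fin n) (Fin n) ℂ)) j k) *
          dBEfun (c * hXh.eigenvalues j + d) (c * hYh.eigenvalues k + d))
      = (∑ k, Complex.normSq ((star (hXh.eigenvectorUnitary : Matrix (Fin n) (Fin n) ℂ) *
            (hYh.eigenvectorUnitary : Matrix (Fin n) (Fin n) ℂ)) j k) *
          ((c * hXh.eigenvalues j + (d + 1)) * Real.log (c * hYh.eigenvalues k + (d + 1))))
        - (∑ k, Complex.normSq ((star (hXh.eigenvectorUnitary : Matrix (Fin n) (Fin n) ℂ) *
            (hYh.eigenvectorUnitary : Matrix (Fin n) (Fin n) ℂ)) j k) *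
          ((c * hXh.eigenvalues j + d) * Real.log (c * hYh.eigenvalues k + d)))
        - gBE (c * hXh.eigenvalues j + d) := by
    intro j _
    rw [show gBE (c * hXh.eigenvalues j + d)
        = ∑ k, Complex.normSq ((star (hXh.eigenvectorUnitary : Matrix (Fin n) (Fin n) ℂ) *
            (hYh.eigenvectorUnitary : Matrix (Fin n) (Fin n) ℂ)) j k) *
          gBE (c * hXh.eigenvalues j + d) from by
      rw [← Finset.sum_mul, hrow, one_mul]]
    rw [← Finset.sum_sub_distrib, ← Finset.sum_sub_distrib]
    refine Finset.sum_congr rfl fun k _ => ?_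
    unfold dBEfun gBE
    rw [show c * hXh.eigenvalues j + d + 1 = c * hXh.eigenvalues j + (d + 1) from by ring,
      show c * hYh.eigenvalues k + d + 1 = c * hYh.eigenvalues k + (d + 1) from by ring]
    ring
  rw [Finset.sum_congr rfl hmain, Finset.sum_sub_distrib, Finset.sum_sub_distrib]
  ring

/-- **affine monotonicity, Theorem 19.** Let `a, b ≥ 0` with `2b + 1 ≥ a`
and `a + b > 0`, and let `X, Y` be Hermitian positive definite.  Then
`D_BE(X‖Y) ≥ D_BE(a·X + b·I ‖ a·Y + b·I)`. -/
theorem stmt_19 {n : ℕ} (a b : ℝ) (ha : 0 ≤ a) (hb : 0 ≤ b)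
    (hcond : a ≤ 2 * b + 1) (hpos : 0 < a + b)
    (X Y : Matrix (Fin n) (Fin n) ℂ) (hX : X.PosDef) (hY : Y.PosDef) :
    DBE (a • X + b • (1 : Matrix (Fin n) (Fin n) ℂ))
        (a • Y + b • (1 : Matrix (Fin n) (Fin n) ℂ)) ≤ DBE X Y := by
  have hXh : X.IsHermitian := hX.1
  have hYh : Y.IsHermitian := hY.1
  have hXid : X = (1 : ℝ) • X + (0 : ℝ) • (1 : Matrix (Fin n) (Fin n) ℂ) := by
    rw [one_smul, zero_smul, add_zero]
  have hYid : Y = (1 : ℝ) • Y + (0 : ℝ) • (1 : Matrix (Fin n) (Fin n) ℂ) := by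
    rw [one_smul, zero_smul, add_zero]
  have hR : DBE X Y = DBE ((1 : ℝ) • X + (0 : ℝ) • (1 : Matrix (Fin n) (Fin n) ℂ))
      ((1 : ℝ) • Y + (0 : ℝ) • (1 : Matrix (Fin n) (Fin n) ℂ)) := by
    rw [← hXid, ← hYid]
  rw [hR, DBE_affine_sum hXh hYh a b, DBE_affine_sum hXh hYh 1 0]
  simp only [one_mul, add_zero]
  refine Finset.sum_le_sum fun j _ => Finset.sum_le_sum fun k _ => ?_
  exact mul_le_mul_of_nonneg_left
    (dBE_scalar_mono ha hb hcond hpos (hX.eigenvalues_pos j) (hY.eigenvalues_pos k))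
    (Complex.normSq_nonneg _)
end
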